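/- arXiv:2509.01698 — 7 statements merged into one kernel-verified Lean document; each statement's English description precedes it below -/
import Mathlib

section
/- Let G be a (bull, chair)-free graph containing an induced odd antihole Q̄ with vertices v_1, …, v_p (p odd, p ≥ 5). Suppose w is a vertex at distance exactly 2 from Q̄ (i.e., w ∉ Q̄, w has no neighbor in Q̄, but w has a neighbor that has a neighbor in Q̄), and suppose w' is a vertex adjacent to w that has at least one neighbor in Q̄ (w' ∉ Q̄). Then w' is adjacent to every vertex of Q̄. -/
open SimpleGraph Finset

/-- The cycle graph on `Fin p` (for `p ≥ 3` this is the cycle `C_p`). -/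
def cycleG (p : ℕ) [NeZero p] : SimpleGraph (Fin p) where
  Adj i j := i ≠ j ∧ (i + 1 = j ∨ j + 1 = i)
  symm := by
    constructor
    rintro i j ⟨h, h'⟩
    exact ⟨h.symm, h'.symm⟩
  loopless := by
    constructor
    rintro i ⟨h, _⟩
    exact h rfl

/-- The clique expansion `C_p[k 0, …, k (p-1)]` of the cycle `C_p`:
vertices of the cycle are replaced by cliques of the prescribed sizes, and
all edges are added between cyclically consecutive cliques. -/
def cliqueExpansion (p : ℕ) [NeZero p] (k : Fin p → ℕ) : SimpleGraph (Σ i : Fin p, Fin (k i)) where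
  Adj a b := a ≠ b ∧ (a.1 = b.1 ∨ a.1 + 1 = b.1 ∨ b.1 + 1 = a.1)
  symm := by
    constructor
    rintro a b ⟨h, h'⟩
    refine ⟨h.symm, ?_⟩
    rcases h' with h' | h' | h'
    · exact Or.inl h'.symm
    · exact Or.inr (Or.inr h')
    · exact Or.inr (Or.inl h')
  loopless := by
    constructor
    rintro a ⟨h, _⟩
    exact h rfl

/-- The join `G ⊕ H` of two graphs: disjoint union plus all edges in between. -/
def joinG {α β : Type*} (G : SimpleGraph α) (H : SimpleGraph β) : SimpleGraph (α ⊕ β) where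
  Adj x y :=
    match x, y with
    | Sum.inl a, Sum.inl b => G.Adj a b
    | Sum.inr a, Sum.inr b => H.Adj a b
    | _, _ => True
  symm := by
    constructor
    rintro (a | a) (b | b) h
    · exact G.adj_symm h
    · trivial
    · trivial
    · exact H.adj_symm h
  loopless := by
    constructor
    rintro (a | a) h
    · exact G.irrefl h
    · exact H.irrefl h

/-- The bull: a triangle with two pendant edges. -/
def bull : SimpleGraph (Fin 5) :=
  SimpleGraph.fromRel (fun a b =>
    (a = 0 ∧ b = 1) ∨ (a = 1 ∧ b = 2) ∨ (a = 2 ∧ b = 3) ∨ (a = 3 ∧ b = 4) ∨ (a = 1 ∧ b = 3))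

/-- The claw `K_{1,3}`. -/
def claw : SimpleGraph (Fin 4) :=
  SimpleGraph.fromRel (fun a b => a = 0 ∧ b ≠ 0)

/-- The chair: the claw with one edge subdivided once. -/
def chair : SimpleGraph (Fin 5) :=
  SimpleGraph.fromRel (fun a b =>
    (a = 0 ∧ b = 1) ∨ (a = 0 ∧ b = 2) ∨ (a = 0 ∧ b = 3) ∨ (a = 3 ∧ b = 4))

/-- `G` contains `H` as a (not necessarily induced) subgraph. -/
def ContainsSub {V W : Type*} (G : SimpleGraph V) (H : SimpleGraph W) : Prop :=
  ∃ f : H →g G, Function.Injective f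

/-- The independence number of a finite graph. -/
noncomputable def indepNum {V : Type*} [Fintype V] (G : SimpleGraph V) : ℕ :=
  sSup {n | ∃ s : Finset V, s.card = n ∧ ∀ a ∈ s, ∀ b ∈ s, a ≠ b → ¬ G.Adj a b}

/-- Clique sizes of the spindle graph `M_{3i+1} = C_{2i+1}[2,1,2,1,…,2,1,1]`. -/
def spindleKs (i : ℕ) : Fin (2 * i + 1) → ℕ :=
  fun j => if j.val % 2 = 0 ∧ j.val < 2 * i then 2 else 1

/-- Clique sizes `[2,…,2,1,3,1,3,1,…,3,1]`: `a` copies of `2`, then a `1`,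
then alternating `3,1`-pairs up to length `p`. -/
def patternKs (p a : ℕ) : Fin p → ℕ :=
  fun j => if j.val < a then 2 else if (j.val - a) % 2 = 0 then 1 else 3

/-!
If `w'` sees two cyclically consecutive vertices `vᵢ, vᵢ₊₁` but misses `vᵢ₊₂`, then
`w', w, vᵢ₊₁, vᵢ, vᵢ₊₂` induce a chair; so a consecutive pair of neighbours propagates around
the antihole and `w'` dominates it. Such a pair exists: a lone neighbour `vᵢ` is impossible, as
`vᵢ, vᵢ₊₂, vᵢ₊₃, w', w` would induce a chair, and two non-consecutive neighbours `vᵢ, vₖ` of `w'`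
with no consecutive pair among its neighbours yield the bull `w, w', vᵢ, vₖ, vₘ`, where `m = i + 1`,
or `m = i - 1` when `k = i + 2`.
-/

theorem Fin.forall_of_imp_add_one {p : ℕ} [NeZero p] {P : Fin p → Prop} {i : Fin p} (hi : P i)
    (step : ∀ j, P j → P (j + 1)) (j : Fin p) : P j := by
  open Fin.CommRing in
  have hP : ∀ n : ℕ, P (i + n) := by
    intro n
    induction n with
    | zero => simpa using hi
    | succ n ih => simpa [add_assoc] using step _ ih
  simpa using hP (j - i).val

namespace SimpleGraph

variable {V : Type*} {G : SimpleGraph V}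

theorem nonempty_chair_embedding {a₀ a₁ a₂ a₃ a₄ : V}
    (h₀₁ : G.Adj a₀ a₁) (h₀₂ : G.Adj a₀ a₂) (h₀₃ : G.Adj a₀ a₃) (h₃₄ : G.Adj a₃ a₄)
    (n₁₂ : ¬G.Adj a₁ a₂) (n₁₃ : ¬G.Adj a₁ a₃) (n₁₄ : ¬G.Adj a₁ a₄)
    (n₂₃ : ¬G.Adj a₂ a₃) (n₂₄ : ¬G.Adj a₂ a₄) (n₀₄ : ¬G.Adj a₀ a₄) (e₁₂ : a₁ ≠ a₂) :
    Nonempty (chair ↪g G) := by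
  have e₀₄ := G.ne_of_adj_of_not_adj h₀₁ (fun h ↦ n₁₄ h.symm)
  have e₁₃ := (G.ne_of_adj_of_not_adj h₃₄ n₁₄).symm
  have e₁₄ := G.ne_of_adj_of_not_adj h₀₁.symm (fun h ↦ n₀₄ h.symm)
  have e₂₃ := (G.ne_of_adj_of_not_adj h₃₄ n₂₄).symm
  have e₂₄ := G.ne_of_adj_of_not_adj h₀₂.symm (fun h ↦ n₀₄ h.symm)
  refine ⟨⟨⟨![a₀, a₁, a₂, a₃, a₄], fun x y h ↦ ?_⟩, fun {x y} ↦ ?_⟩⟩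
  · fin_cases x <;> fin_cases y <;> simp_all [h₀₁.ne, h₀₂.ne, h₀₃.ne, h₃₄.ne, eq_comm]
  · change G.Adj (![a₀, a₁, a₂, a₃, a₄] x) (![a₀, a₁, a₂, a₃, a₄] y) ↔ chair.Adj x y
    fin_cases x <;> fin_cases y <;> simp [chair, fromRel_adj, G.adj_comm, *]

theorem nonempty_bull_embedding {a₀ a₁ a₂ a₃ a₄ : V}
    (h₀₁ : G.Adj a₀ a₁) (h₁₂ : G.Adj a₁ a₂) (h₂₃ : G.Adj a₂ a₃) (h₃₄ : G.Adj a₃ a₄)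
    (h₁₃ : G.Adj a₁ a₃) (n₀₂ : ¬G.Adj a₀ a₂) (n₀₃ : ¬G.Adj a₀ a₃) (n₀₄ : ¬G.Adj a₀ a₄)
    (n₁₄ : ¬G.Adj a₁ a₄) (n₂₄ : ¬G.Adj a₂ a₄) :
    Nonempty (bull ↪g G) := by
  have e₀₂ := (G.ne_of_adj_of_not_adj h₂₃ n₀₃).symm
  have e₀₃ := (G.ne_of_adj_of_not_adj h₂₃.symm n₀₂).symm
  have e₀₄ := G.ne_of_adj_of_not_adj h₀₁ (fun h ↦ n₁₄ h.symm)
  have e₁₄ := G.ne_of_adj_of_not_adj h₁₂ (fun h ↦ n₂₄ h.symm)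
  have e₂₄ := G.ne_of_adj_of_not_adj h₁₂.symm (fun h ↦ n₁₄ h.symm)
  refine ⟨⟨⟨![a₀, a₁, a₂, a₃, a₄], fun x y h ↦ ?_⟩, fun {x y} ↦ ?_⟩⟩
  · fin_cases x <;> fin_cases y <;> simp_all [h₀₁.ne, h₁₂.ne, h₂₃.ne, h₃₄.ne, h₁₃.ne, eq_comm]
  · change G.Adj (![a₀, a₁, a₂, a₃, a₄] x) (![a₀, a₁, a₂, a₃, a₄] y) ↔ bull.Adj x y
    fin_cases x <;> fin_cases y <;> simp [bull, fromRel_adj, G.adj_comm, *]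

variable {p : ℕ} [NeZero p] {v : Fin p → V}

def IsAntihole (G : SimpleGraph V) (v : Fin p → V) : Prop :=
  ∀ i j, G.Adj (v i) (v j) ↔ (cycleG p)ᶜ.Adj i j

namespace IsAntihole

theorem adj_iff (hv : G.IsAntihole v) {i j : Fin p} :
    G.Adj (v i) (v j) ↔ i ≠ j ∧ i + 1 ≠ j ∧ j + 1 ≠ i := by
  rw [hv, compl_adj]
  simp only [cycleG]
  tauto

theorem adj_add_iff (hv : G.IsAntihole v) (i d : Fin p) :
    G.Adj (v i) (v (i + d)) ↔ d ≠ 0 ∧ d ≠ 1 ∧ d + 1 ≠ 0 := by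
  rw [hv.adj_iff, add_assoc]
  simp [eq_comm]

theorem not_adj_add_one (hv : G.IsAntihole v) (i : Fin p) : ¬G.Adj (v i) (v (i + 1)) := by
  simp [hv.adj_add_iff]

theorem adj_add_two (hv : G.IsAntihole v) (hp : 4 ≤ p) (i : Fin p) : G.Adj (v i) (v (i + 2)) := by
  rw [hv.adj_add_iff]
  simp [Fin.ext_iff, Fin.val_add, Nat.mod_eq_of_lt, show 1 < p by omega, show 2 < p by omega,
    show 3 < p by omega]

theorem adj_add_three (hv : G.IsAntihole v) (hp : 5 ≤ p) (i : Fin p) :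
    G.Adj (v i) (v (i + 3)) := by
  rw [hv.adj_add_iff]
  simp [Fin.ext_iff, Fin.val_add, Nat.mod_eq_of_lt, show 1 < p by omega, show 3 < p by omega,
    show 4 < p by omega]

variable {w w' : V}

theorem adj_add_two_of_adj_of_adj_add_one (hv : G.IsAntihole v) (hp : 4 ≤ p)
    (hchair : ¬Nonempty (chair ↪g G)) (hww' : G.Adj w w') (hw : ∀ i, w ≠ v i)
    (hwfar : ∀ i, ¬G.Adj w (v i)) {i : Fin p} (h₀ : G.Adj w' (v i)) (h₁ : G.Adj w' (v (i + 1))) :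
    G.Adj w' (v (i + 2)) := by
  by_contra h₂
  refine hchair (nonempty_chair_embedding hww'.symm h₁ h₀ (hv.adj_add_two hp i) (hwfar _)
    (hwfar _) (hwfar _) (fun h ↦ hv.not_adj_add_one i h.symm) (fun h ↦ ?_) h₂ (hw _))
  rw [show i + 2 = i + 1 + 1 by open Fin.CommRing in ring] at h
  exact hv.not_adj_add_one _ h

theorem forall_adj_of_adj_of_adj_add_one (hv : G.IsAntihole v) (hp : 4 ≤ p)
    (hchair : ¬Nonempty (chair ↪g G)) (hww' : G.Adj w w') (hw : ∀ i, w ≠ v i)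
    (hwfar : ∀ i, ¬G.Adj w (v i)) {i : Fin p} (h₀ : G.Adj w' (v i)) (h₁ : G.Adj w' (v (i + 1)))
    (j : Fin p) : G.Adj w' (v j) := by
  refine (Fin.forall_of_imp_add_one (P := fun j ↦ G.Adj w' (v j) ∧ G.Adj w' (v (j + 1)))
    ⟨h₀, h₁⟩ (fun j ⟨hj₀, hj₁⟩ ↦ ⟨hj₁, ?_⟩) j).1
  rw [show j + 1 + 1 = j + 2 by open Fin.CommRing in ring]
  exact hv.adj_add_two_of_adj_of_adj_add_one hp hchair hww' hw hwfar hj₀ hj₁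

theorem exists_ne_adj (hv : G.IsAntihole v) (hp : 5 ≤ p) (hvinj : Function.Injective v)
    (hchair : ¬Nonempty (chair ↪g G)) (hww' : G.Adj w w') (hwfar : ∀ i, ¬G.Adj w (v i))
    {i : Fin p} (hi : G.Adj w' (v i)) : ∃ k ≠ i, G.Adj w' (v k) := by
  by_contra! hlone
  have e23 : v (i + 2) ≠ v (i + 3) := hvinj.ne <| (add_right_injective i).ne <| by
    simp [Fin.ext_iff, Nat.mod_eq_of_lt, show 2 < p by omega, show 3 < p by omega]
  have hn23 : ¬G.Adj (v (i + 2)) (v (i + 3)) := by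
    rw [show i + 3 = i + 2 + 1 by open Fin.CommRing in ring]
    exact hv.not_adj_add_one _
  have h02 := hv.adj_add_two (by omega) i
  have h03 := hv.adj_add_three hp i
  refine hchair (nonempty_chair_embedding h02 h03 hi.symm hww'.symm hn23
    (fun h ↦ hlone _ (fun e ↦ h02.ne' (congrArg v e)) h.symm) (fun h ↦ hwfar _ h.symm)
    (fun h ↦ hlone _ (fun e ↦ h03.ne' (congrArg v e)) h.symm) (fun h ↦ hwfar _ h.symm)
    (fun h ↦ hwfar _ h.symm) e23)

theorem exists_adj_adj_add_one (hv : G.IsAntihole v) (hp : 5 ≤ p)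
    (hbull : ¬Nonempty (bull ↪g G)) (hww' : G.Adj w w') (hwfar : ∀ i, ¬G.Adj w (v i))
    {i k : Fin p} (hi : G.Adj w' (v i)) (hk : G.Adj w' (v k)) (hki : k ≠ i) :
    ∃ j, G.Adj w' (v j) ∧ G.Adj w' (v (j + 1)) := by
  by_contra! hgap
  have hik : G.Adj (v i) (v k) :=
    hv.adj_iff.2 ⟨hki.symm, fun h ↦ hgap i hi (h ▸ hk), fun h ↦ hgap k hk (h ▸ hi)⟩
  have no_bull {m : Fin p} (hkm : G.Adj (v k) (v m)) (hw'm : ¬G.Adj w' (v m))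
      (him : ¬G.Adj (v i) (v m)) : False :=
    hbull (nonempty_bull_embedding hww' hi hik hkm hk (hwfar i) (hwfar k) (hwfar m) hw'm him)
  open Fin.CommRing in
  by_cases hk2 : k = i + 2
  · subst hk2
    refine no_bull (m := i - 1) ?_ (fun h ↦ hgap _ h (by rwa [sub_add_cancel])) ?_
    · simpa [show i - 1 + 3 = i + 2 by ring, G.adj_comm] using hv.adj_add_three hp (i - 1)
    · simpa [G.adj_comm] using hv.not_adj_add_one (i - 1)
  · refine no_bull (m := i + 1) (hv.adj_iff.2 ⟨?_, ?_, ?_⟩) (hgap i hi) (hv.not_adj_add_one i)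
    · exact fun h ↦ hgap i hi (h ▸ hk)
    · exact fun h ↦ hki (add_right_cancel h)
    · exact fun h ↦ hk2 (by rw [← h]; ring)

end IsAntihole

end SimpleGraph

theorem second_neighborhood_dominating_general {V : Type*} (G : SimpleGraph V)
    (hbull : ¬ Nonempty (bull ↪g G)) (hchair : ¬ Nonempty (chair ↪g G))
    (p : ℕ) [NeZero p] (hp : 5 ≤ p)
    (v : Fin p → V) (hvinj : Function.Injective v)
    (hv : ∀ i j : Fin p, G.Adj (v i) (v j) ↔ ((cycleG p)ᶜ).Adj i j)
    (w w' : V) (hw : ∀ i, w ≠ v i) (hwfar : ∀ i, ¬ G.Adj w (v i))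
    (hww' : G.Adj w w') (hw'adj : ∃ i, G.Adj w' (v i)) :
    ∀ i : Fin p, G.Adj w' (v i) := by
  have hQ : G.IsAntihole v := hv
  obtain ⟨i, hi⟩ := hw'adj
  obtain ⟨k, hki, hk⟩ := hQ.exists_ne_adj hp hvinj hchair hww' hwfar hi
  obtain ⟨j, hj, hj₁⟩ := hQ.exists_adj_adj_add_one hp hbull hww' hwfar hi hk hki
  exact hQ.forall_adj_of_adj_of_adj_add_one (by omega) hchair hww' hw hwfar hj hj₁

theorem second_neighborhood_dominating {V : Type*} (G : SimpleGraph V)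
    (hbull : ¬ Nonempty (bull ↪g G)) (hchair : ¬ Nonempty (chair ↪g G))
    (p : ℕ) [NeZero p] (hodd : Odd p) (hp : 5 ≤ p)
    (v : Fin p → V) (hvinj : Function.Injective v)
    (hv : ∀ i j : Fin p, G.Adj (v i) (v j) ↔ ((cycleG p)ᶜ).Adj i j)
    (w w' : V) (hw : ∀ i, w ≠ v i) (hwfar : ∀ i, ¬ G.Adj w (v i))
    (hw' : ∀ i, w' ≠ v i) (hww' : G.Adj w w') (hw'adj : ∃ i, G.Adj w' (v i)) :
    ∀ i : Fin p, G.Adj w' (v i) :=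
  second_neighborhood_dominating_general G hbull hchair p hp v hvinj hv w w' hw hwfar hww' hw'adj
end

section
/- Let G be a (bull, chair)-free graph containing an induced odd antihole Q̄ with vertices v_1, …, v_p (p odd, p ≥ 5). If some vertex w ∉ Q̄ has exactly 4 neighbors in Q̄, then G contains an induced cycle C_5. -/
open SimpleGraph Finset

/-!
Four consecutive vertices `v b, …, v (b + 3)` of the antihole induce the path
`v (b + 1) – v (b + 3) – v b – v (b + 2)`. Read the adjacency of `w` to them as a word in `{0, 1}`:
`0110` closes the path into a `C₅`, `0001` gives a chair and `1001` a bull. For `p = 5` the antihole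
is itself a `C₅`. For odd `p ≥ 7` with exactly four neighbours one of these words occurs: a run of
at least two non-neighbours ends in `0001` or `1001`, and without such a run every two consecutive
positions contain a neighbour, so `p ≤ 8`, i.e. `p = 7`, which is settled by enumeration.
-/

structure IsInducedPath4 {V : Type*} (G : SimpleGraph V) (a b c d : V) : Prop where
  adj_ab : G.Adj a b
  adj_bc : G.Adj b c
  adj_cd : G.Adj c d
  not_adj_ac : ¬ G.Adj a c
  not_adj_ad : ¬ G.Adj a d
  not_adj_bd : ¬ G.Adj b d

namespace IsInducedPath4

variable {V : Type*} {G : SimpleGraph V} {a b c d w : V}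

lemma pairwise_ne (h : IsInducedPath4 G a b c d) :
    a ≠ b ∧ a ≠ c ∧ a ≠ d ∧ b ≠ c ∧ b ≠ d ∧ c ≠ d :=
  ⟨h.adj_ab.ne, fun e => h.not_adj_ad (e ▸ h.adj_cd), fun e => h.not_adj_bd (e ▸ h.adj_ab.symm),
    h.adj_bc.ne, fun e => h.not_adj_ad (e ▸ h.adj_ab), h.adj_cd.ne⟩

lemma nonempty_cycleG_five_embedding (h : IsInducedPath4 G a b c d)
    (hwa : G.Adj w a) (hwd : G.Adj w d) (hwb : ¬ G.Adj w b) (hwc : ¬ G.Adj w c) :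
    Nonempty (cycleG 5 ↪g G) := by
  have := h.pairwise_ne
  have : w ≠ b := fun e => h.not_adj_bd (e ▸ hwd)
  have : w ≠ c := fun e => h.not_adj_ac (e ▸ hwa.symm)
  obtain ⟨hab, hbc, hcd, hac, had, hbd⟩ := h
  refine ⟨⟨⟨![w, a, b, c, d], ?_⟩, ?_⟩⟩
  · intro i j h
    fin_cases i <;> fin_cases j <;> simp_all [eq_comm]
  · intro i j
    change G.Adj (![w, a, b, c, d] i) (![w, a, b, c, d] j) ↔ _
    fin_cases i <;> fin_cases j <;> simp_all [cycleG, G.adj_comm]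

lemma nonempty_chair_embedding (h : IsInducedPath4 G a b c d) (hwa' : w ≠ a)
    (hwb : G.Adj w b) (hwa : ¬ G.Adj w a) (hwc : ¬ G.Adj w c) (hwd : ¬ G.Adj w d) :
    Nonempty (chair ↪g G) := by
  have := h.pairwise_ne
  have : w ≠ c := fun e => hwd (e ▸ h.adj_cd)
  have : w ≠ d := fun e => h.not_adj_bd (e ▸ hwb.symm)
  obtain ⟨hab, hbc, hcd, hac, had, hbd⟩ := h
  refine ⟨⟨⟨![b, w, a, c, d], ?_⟩, ?_⟩⟩
  · intro i j h
    fin_cases i <;> fin_cases j <;> simp_all [eq_comm]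
  · intro i j
    change G.Adj (![b, w, a, c, d] i) (![b, w, a, c, d] j) ↔ _
    fin_cases i <;> fin_cases j <;> simp_all [chair, G.adj_comm]

lemma nonempty_bull_embedding (h : IsInducedPath4 G a b c d)
    (hwb : G.Adj w b) (hwc : G.Adj w c) (hwa : ¬ G.Adj w a) (hwd : ¬ G.Adj w d) :
    Nonempty (bull ↪g G) := by
  have := h.pairwise_ne
  have : w ≠ a := fun e => h.not_adj_ac (e ▸ hwc)
  have : w ≠ d := fun e => h.not_adj_bd (e ▸ hwb.symm)
  obtain ⟨hab, hbc, hcd, hac, had, hbd⟩ := h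
  refine ⟨⟨⟨![a, b, w, c, d], ?_⟩, ?_⟩⟩
  · intro i j h
    fin_cases i <;> fin_cases j <;> simp_all [eq_comm]
  · intro i j
    change G.Adj (![a, b, w, c, d] i) (![a, b, w, c, d] j) ↔ _
    fin_cases i <;> fin_cases j <;> simp_all [bull, G.adj_comm]

end IsInducedPath4

open Fin.NatCast Fin.CommRing

section Cyclic

variable {p : ℕ} [NeZero p]

lemma Fin.forall_of_add_one_closed {P : Fin p → Prop} {x : Fin p} (hx : P x)
    (h : ∀ y, P y → P (y + 1)) (y : Fin p) : P y := by
  have key : ∀ n : ℕ, P (x + n) := by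
    intro n
    induction n with
    | zero => simpa using hx
    | succ n ih => simpa [← add_assoc] using h _ ih
  simpa using key (y - x).val

lemma Fin.exists_gap_before_mem {s : Finset (Fin p)} (hs : s.Nonempty) {x : Fin p}
    (hx : x ∉ s) (hx' : x + 1 ∉ s) : ∃ y, y ∉ s ∧ y + 1 ∉ s ∧ y + 2 ∈ s := by
  by_contra! h
  obtain ⟨z, hz⟩ := hs
  refine (Fin.forall_of_add_one_closed (P := fun y => y ∉ s ∧ y + 1 ∉ s) ⟨hx, hx'⟩
    (fun y hy => ⟨hy.2, ?_⟩) z).1 hz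
  rw [add_assoc, one_add_one_eq_two]
  exact h y hy.1 hy.2

lemma Fin.le_two_mul_card_of_mem_or_add_one_mem {s : Finset (Fin p)}
    (hs : ∀ x, x ∈ s ∨ x + 1 ∈ s) : p ≤ 2 * #s := by
  have hcover : (univ : Finset (Fin p)) ⊆ s ∪ s.image (· - 1) := by
    intro x _
    rcases hs x with h | h
    · exact mem_union_left _ h
    · exact mem_union_right _ (mem_image.2 ⟨x + 1, h, add_sub_cancel_right x 1⟩)
  calc p = #(univ : Finset (Fin p)) := by simp
    _ ≤ #(s ∪ s.image (· - 1)) := card_le_card hcover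
    _ ≤ #s + #(s.image (· - 1)) := card_union_le _ _
    _ ≤ 2 * #s := by linarith [card_image_le (s := s) (f := (· - 1))]

set_option maxRecDepth 10000 in
lemma Fin.seven_exists_pattern_0110 :
    ∀ s : Finset (Fin 7), #s = 4 → (∀ x, x ∈ s ∨ x + 1 ∈ s) →
      ∃ b, b ∉ s ∧ b + 1 ∈ s ∧ b + 2 ∈ s ∧ b + 3 ∉ s := by
  decide

lemma Fin.exists_pattern_of_card_eq_four {s : Finset (Fin p)} (hodd : Odd p) (hp : 7 ≤ p)
    (hs : #s = 4) :
    ∃ b, (b ∉ s ∧ b + 1 ∈ s ∧ b + 2 ∈ s ∧ b + 3 ∉ s) ∨ (b + 1 ∉ s ∧ b + 2 ∉ s ∧ b + 3 ∈ s) := by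
  by_cases hgap : ∃ x, x ∉ s ∧ x + 1 ∉ s
  · obtain ⟨x, hx, hx'⟩ := hgap
    obtain ⟨y, hy⟩ := Fin.exists_gap_before_mem (card_pos.1 (by omega)) hx hx'
    refine ⟨y - 1, Or.inr ?_⟩
    rwa [sub_add_cancel, sub_add_eq_add_sub, sub_add_eq_add_sub, add_sub_assoc,
      add_sub_assoc, show (2 : Fin p) - 1 = 1 by ring, show (3 : Fin p) - 1 = 2 by ring]
  · push Not at hgap
    have hcover : ∀ x, x ∈ s ∨ x + 1 ∈ s := fun x => or_iff_not_imp_left.2 (hgap x)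
    have : p = 7 := by
      have := Fin.le_two_mul_card_of_mem_or_add_one_mem hcover
      obtain ⟨m, rfl⟩ := hodd
      omega
    subst this
    obtain ⟨b, hb⟩ := Fin.seven_exists_pattern_0110 s hs hcover
    exact ⟨b, Or.inl hb⟩

end Cyclic

section Antihole

variable {V : Type*} {G : SimpleGraph V} {p : ℕ} [NeZero p]

lemma cycleG_compl_adj_add (b : Fin p) {i j : ℕ} (hi : i + 1 < p) (hj : j + 1 < p) :
    ((cycleG p)ᶜ).Adj (b + i) (b + j) ↔ i ≠ j ∧ i + 1 ≠ j ∧ j + 1 ≠ i := by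
  have cast_inj : ∀ {k l : ℕ}, k < p → l < p → ((k : Fin p) = l ↔ k = l) := fun hk hl => by
    simp [Fin.ext_iff, Fin.val_cast_of_lt hk, Fin.val_cast_of_lt hl]
  have succ_eq : ∀ k : ℕ, b + k + 1 = b + (k + 1 : ℕ) := fun k => by push_cast; ring
  rw [compl_adj]
  simp only [cycleG, succ_eq, add_right_inj, ne_eq]
  rw [cast_inj (k := i) (l := j) (by omega) (by omega),
    cast_inj (k := i + 1) (l := j) hi (by omega), cast_inj (k := j + 1) (l := i) hj (by omega)]
  tauto

lemma isInducedPath4_of_antihole (hp : 5 ≤ p) {v : Fin p → V}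
    (hv : ∀ i j, G.Adj (v i) (v j) ↔ ((cycleG p)ᶜ).Adj i j) (b : Fin p) :
    IsInducedPath4 G (v (b + 1)) (v (b + 3)) (v b) (v (b + 2)) := by
  have key : ∀ i j : ℕ, i ≤ 3 → j ≤ 3 →
      (G.Adj (v (b + i)) (v (b + j)) ↔ i ≠ j ∧ i + 1 ≠ j ∧ j + 1 ≠ i) := fun i j hi hj =>
    (hv _ _).trans (cycleG_compl_adj_add b (by omega) (by omega))
  refine ⟨?_, ?_, ?_, ?_, ?_, ?_⟩
  · simpa using (key 1 3 (by omega) (by omega)).2 (by omega)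
  · simpa using (key 3 0 (by omega) (by omega)).2 (by omega)
  · simpa using (key 0 2 (by omega) (by omega)).2 (by omega)
  · simpa using mt (key 1 0 (by omega) (by omega)).1 (by omega)
  · simpa using mt (key 1 2 (by omega) (by omega)).1 (by omega)
  · simpa using mt (key 3 2 (by omega) (by omega)).1 (by omega)

end Antihole

theorem four_neighbors_gives_C5_general {V : Type*} (G : SimpleGraph V)
    (hbull : ¬ Nonempty (bull ↪g G)) (hchair : ¬ Nonempty (chair ↪g G))
    (p : ℕ) [NeZero p] (hodd : Odd p) (hp : 5 ≤ p)
    (v : Fin p → V)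
    (hv : ∀ i j : Fin p, G.Adj (v i) (v j) ↔ ((cycleG p)ᶜ).Adj i j)
    (w : V) (hw : ∀ i, w ≠ v i)
    (hdeg : {i : Fin p | G.Adj w (v i)}.ncard = 4) :
    Nonempty (cycleG 5 ↪g G) := by
  classical
  have hP := isInducedPath4_of_antihole hp hv
  obtain rfl | hp7 : p = 5 ∨ 7 ≤ p := by obtain ⟨m, rfl⟩ := hodd; omega
  · exact (hP 0).nonempty_cycleG_five_embedding (w := v 4) ((hv _ _).2 (by simp [cycleG]))
      ((hv _ _).2 (by simp [cycleG])) (mt (hv _ _).1 (by simp [cycleG]))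
      (mt (hv _ _).1 (by simp [cycleG]))
  set s := univ.filter fun i => G.Adj w (v i)
  have hs : #s = 4 := by
    rw [← hdeg, ← Set.ncard_coe_finset]
    congr
    ext
    simp [s]
  obtain ⟨b, ⟨h0, h1, h2, h3⟩ | ⟨h1, h2, h3⟩⟩ :=
      Fin.exists_pattern_of_card_eq_four hodd hp7 hs <;>
    simp only [s, mem_filter, mem_univ, true_and] at *
  · exact (hP b).nonempty_cycleG_five_embedding h1 h2 h3 h0
  · by_cases h0 : G.Adj w (v b)
    · exact (hbull ((hP b).nonempty_bull_embedding h3 h0 h1 h2)).elim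
    · exact (hchair ((hP b).nonempty_chair_embedding (hw _) h3 h1 h0 h2)).elim

theorem four_neighbors_gives_C5 {V : Type*} (G : SimpleGraph V)
    (hbull : ¬ Nonempty (bull ↪g G)) (hchair : ¬ Nonempty (chair ↪g G))
    (p : ℕ) [NeZero p] (hodd : Odd p) (hp : 5 ≤ p)
    (v : Fin p → V) (hvinj : Function.Injective v)
    (hv : ∀ i j : Fin p, G.Adj (v i) (v j) ↔ ((cycleG p)ᶜ).Adj i j)
    (w : V) (hw : ∀ i, w ≠ v i)
    (hdeg : {i : Fin p | G.Adj w (v i)}.ncard = 4) :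
    Nonempty (cycleG 5 ↪g G) :=
  four_neighbors_gives_C5_general G hbull hchair p hodd hp v hv w hw hdeg
end

section
/- Let G be a connected (bull, claw)-free finite graph containing an induced odd antihole Q̄. Then the vertex set of Q̄ is a dominating set of G: every vertex of G either belongs to Q̄ or is adjacent to some vertex of Q̄. -/
open SimpleGraph Finset

/-
Domination by `Q̄` propagates along edges, so by connectivity it suffices to rule out an edge
`x ∼ y` with `y` dominated and `x` anticomplete to `Q̄`. Then `y ∉ Q̄` has a neighbour `f i`.
A claw centred at `y` (with leaf `x`) forbids `y` from seeing two cycle-consecutive vertices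
of `Q̄`; a claw centred at `f i` (with leaves `y`, `f (i + 2)`, `f (i + 3)`) forces a second
neighbour `f j`, and then `f i ∼ f j`. A cycle-neighbour `w` of `j` that is far from `i`
(it exists since `p ≥ 5`) gives the bull `x, y, f j, f i, f w`.
-/

open scoped Fin.CommRing

section Cycle

variable {p : ℕ} [NeZero p]

lemma Fin.ofNat_ne_zero_of_five_le (hp : 5 ≤ p) :
    (1 : Fin p) ≠ 0 ∧ (2 : Fin p) ≠ 0 ∧ (3 : Fin p) ≠ 0 ∧ (4 : Fin p) ≠ 0 := by
  have h : ∀ k : ℕ, 0 < k → k < 5 → (k : Fin p) ≠ 0 := fun k h0 hk hd =>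
    absurd (Nat.le_of_dvd h0 (Fin.natCast_eq_zero.1 hd)) (by omega)
  exact ⟨by simpa using h 1, by simpa using h 2, by simpa using h 3, by simpa using h 4⟩

lemma cycleG_compl_adj {i j : Fin p} : (cycleG p)ᶜ.Adj i j ↔ i ≠ j ∧ i + 1 ≠ j ∧ j + 1 ≠ i := by
  simp only [compl_adj, cycleG]
  tauto

lemma exists_compl_adj_compl_adj_adj (hp : 5 ≤ p) (i : Fin p) :
    ∃ k l, (cycleG p)ᶜ.Adj i k ∧ (cycleG p)ᶜ.Adj i l ∧ (cycleG p).Adj k l := by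
  obtain ⟨h1, h2, h3, h4⟩ := Fin.ofNat_ne_zero_of_five_le hp
  refine ⟨i + 2, i + 3, cycleG_compl_adj.2 ⟨?_, ?_, ?_⟩, cycleG_compl_adj.2 ⟨?_, ?_, ?_⟩,
    fun h => h1 (by linear_combination -h), Or.inl (by ring)⟩ <;> intro h
  · exact h2 (by linear_combination -h)
  · exact h1 (by linear_combination -h)
  · exact h3 (by linear_combination h)
  · exact h3 (by linear_combination -h)
  · exact h2 (by linear_combination -h)
  · exact h4 (by linear_combination h)

lemma exists_cycleG_adj_compl_adj (hp : 5 ≤ p) {i j : Fin p} (hij : (cycleG p)ᶜ.Adj i j) :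
    ∃ w, (cycleG p).Adj j w ∧ (cycleG p)ᶜ.Adj i w := by
  obtain ⟨h1, h2, h3, h4⟩ := Fin.ofNat_ne_zero_of_five_le hp
  obtain ⟨hne, hsucc, hsucc'⟩ := cycleG_compl_adj.1 hij
  by_cases hi : i = j + 2
  · refine ⟨j - 1, ⟨fun h => h1 (by linear_combination h), Or.inr (by ring)⟩,
      cycleG_compl_adj.2 ⟨fun h => h3 (by linear_combination h - hi),
        fun h => h4 (by linear_combination h - hi), fun h => h2 (by linear_combination -hi - h)⟩⟩
  · exact ⟨j + 1, ⟨fun h => h1 (by linear_combination -h), Or.inl rfl⟩,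
      cycleG_compl_adj.2 ⟨fun h => hsucc' h.symm, fun h => hne (by linear_combination h),
        fun h => hi (by linear_combination -h)⟩⟩

end Cycle

section
variable {V : Type*} {G : SimpleGraph V}

lemma nonempty_claw_embedding {a b c d : V}
    (hab : G.Adj a b) (hac : G.Adj a c) (had : G.Adj a d)
    (hbc : ¬ G.Adj b c) (hbd : ¬ G.Adj b d) (hcd : ¬ G.Adj c d)
    (nbc : b ≠ c) (nbd : b ≠ d) (ncd : c ≠ d) :
    Nonempty (claw ↪g G) := by
  refine ⟨⟨⟨![a, b, c, d], ?_⟩, ?_⟩⟩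
  · intro i j h
    fin_cases i <;> fin_cases j <;> simp_all
  · intro i j
    change G.Adj (![a, b, c, d] i) (![a, b, c, d] j) ↔ claw.Adj i j
    fin_cases i <;> fin_cases j <;> simp [claw, fromRel_adj, G.adj_comm, *]

lemma nonempty_bull_embedding {a b c d e : V}
    (hab : G.Adj a b) (hbc : G.Adj b c) (hcd : G.Adj c d) (hde : G.Adj d e) (hbd : G.Adj b d)
    (hac : ¬ G.Adj a c) (had : ¬ G.Adj a d) (hae : ¬ G.Adj a e)
    (hbe : ¬ G.Adj b e) (hce : ¬ G.Adj c e)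
    (nac : a ≠ c) (nad : a ≠ d) (nae : a ≠ e) (nbe : b ≠ e) (nce : c ≠ e) :
    Nonempty (bull ↪g G) := by
  refine ⟨⟨⟨![a, b, c, d, e], ?_⟩, ?_⟩⟩
  · intro i j h
    fin_cases i <;> fin_cases j <;> simp_all
  · intro i j
    change G.Adj (![a, b, c, d, e] i) (![a, b, c, d, e] j) ↔ bull.Adj i j
    fin_cases i <;> fin_cases j <;> simp [bull, fromRel_adj, G.adj_comm, *]

end

theorem SimpleGraph.Preconnected.forall_of_adj_imp {V : Type*} {G : SimpleGraph V}
    (hG : G.Preconnected) {P : V → Prop} (hP : ∀ x y, G.Adj x y → P y → P x) {v : V} (hv : P v)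
    (x : V) : P x := by
  obtain ⟨w⟩ := hG x v
  induction w with
  | nil => exact hv
  | cons h _ ih => exact hP _ _ h (ih hv)

section Antihole

variable {V : Type*} {G : SimpleGraph V} {p : ℕ} [NeZero p] (f : (cycleG p)ᶜ ↪g G) {x y : V}

lemma not_adj_of_cycleG_adj (hclaw : ¬ Nonempty (claw ↪g G)) (hxy : G.Adj x y)
    (hxQ : ∀ i, x ≠ f i) (hxN : ∀ i, ¬ G.Adj x (f i)) {i j : Fin p} (hij : (cycleG p).Adj i j)
    (hi : G.Adj y (f i)) : ¬ G.Adj y (f j) := fun hj =>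
  hclaw <| nonempty_claw_embedding hxy.symm hi hj (hxN i) (hxN j)
    (fun h => (f.map_rel_iff.1 h).2 hij) (hxQ i) (hxQ j) (f.injective.ne hij.1)

lemma exists_ne_adj_of_adj (hclaw : ¬ Nonempty (claw ↪g G)) (hp : 5 ≤ p)
    (hy : ∀ i, y ≠ f i) {i : Fin p} (hi : G.Adj y (f i)) : ∃ j ≠ i, G.Adj y (f j) := by
  by_contra! hone
  obtain ⟨k, l, hik, hil, hkl⟩ := exists_compl_adj_compl_adj_adj hp i
  exact hclaw <| nonempty_claw_embedding hi.symm (f.map_rel_iff.2 hik) (f.map_rel_iff.2 hil)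
    (hone k hik.ne.symm) (hone l hil.ne.symm) (fun h => (f.map_rel_iff.1 h).2 hkl) (hy k) (hy l)
    (f.injective.ne hkl.1)

lemma dominated_of_adj_dominated (hbull : ¬ Nonempty (bull ↪g G))
    (hclaw : ¬ Nonempty (claw ↪g G)) (hp : 5 ≤ p) (hxy : G.Adj x y)
    (hy : (∃ i, y = f i) ∨ ∃ i, G.Adj y (f i)) : (∃ i, x = f i) ∨ ∃ i, G.Adj x (f i) := by
  by_contra! hx
  obtain ⟨hxQ, hxN⟩ := hx
  have hyQ : ∀ i, y ≠ f i := fun i h => hxN i (h ▸ hxy)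
  obtain ⟨i, hi⟩ : ∃ i, G.Adj y (f i) := hy.resolve_left fun ⟨i, h⟩ => hyQ i h
  obtain ⟨j, hji, hj⟩ := exists_ne_adj_of_adj f hclaw hp hyQ hi
  have hij : (cycleG p)ᶜ.Adj i j :=
    (compl_adj _ _ _).2 ⟨hji.symm, fun h => not_adj_of_cycleG_adj f hclaw hxy hxQ hxN h hi hj⟩
  obtain ⟨w, hjw, hiw⟩ := exists_cycleG_adj_compl_adj hp hij
  exact hbull <| nonempty_bull_embedding hxy hj (f.map_rel_iff.2 hij.symm) (f.map_rel_iff.2 hiw)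
    hi (hxN j) (hxN i) (hxN w) (not_adj_of_cycleG_adj f hclaw hxy hxQ hxN hjw hj)
    (fun h => (f.map_rel_iff.1 h).2 hjw) (hxQ j) (hxQ i) (hxQ w) (hyQ w) (f.injective.ne hjw.1)

end Antihole

theorem antihole_dominating_general {V : Type*} (G : SimpleGraph V)
    (hconn : G.Connected)
    (hbull : ¬ Nonempty (bull ↪g G)) (hclaw : ¬ Nonempty (claw ↪g G))
    (p : ℕ) [NeZero p] (hp : 5 ≤ p)
    (f : (cycleG p)ᶜ ↪g G) :
    ∀ x : V, (∃ i, x = f i) ∨ (∃ i, G.Adj x (f i)) :=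
  hconn.preconnected.forall_of_adj_imp
    (fun _ _ hxy => dominated_of_adj_dominated f hbull hclaw hp hxy) (Or.inl ⟨0, rfl⟩)

theorem antihole_dominating {V : Type*} [Fintype V] (G : SimpleGraph V)
    (hconn : G.Connected)
    (hbull : ¬ Nonempty (bull ↪g G)) (hclaw : ¬ Nonempty (claw ↪g G))
    (p : ℕ) [NeZero p] (hodd : Odd p) (hp : 5 ≤ p)
    (f : (cycleG p)ᶜ ↪g G) :
    ∀ x : V, (∃ i, x = f i) ∨ (∃ i, G.Adj x (f i)) :=
  antihole_dominating_general G hconn hbull hclaw p hp f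
end

section
/- Let G be a connected (bull, claw)-free finite graph containing an induced odd antihole Q̄. Let w and w' be two distinct vertices outside Q̄ such that some vertex of Q̄ is adjacent to neither w nor w' (i.e., N_{Q̄}(w) ∪ N_{Q̄}(w') ≠ V(Q̄)). Then w and w' are adjacent in G. -/
open SimpleGraph Finset

/-!
Write `q_i = f i`, so that `q_i q_j` is an edge unless `i, j` are cyclically consecutive. If an
outside vertex `v` sees some `q_i` but misses `q_1, q_2`, claw-freeness confines its neighbours on
the antihole to `q_0, q_3`, and each of the remaining cases gives a claw or a bull. As adjacency to
`v` cannot alternate around the odd cycle, `v` sees two consecutive, hence non-adjacent, `q_a`,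
`q_{a+1}`, and a neighbour of `v` missing the whole antihole would be the third leaf of a claw; by
connectivity every outside vertex sees the antihole. Finally, if `w, w'` both miss `q_1` they both
see `q_0`, and their adjacency to `q_3` (a common neighbour of `q_0, q_1`) produces a claw or a
bull unless `w w'` is an edge.
-/

namespace SimpleGraph

variable {V : Type*} {G : SimpleGraph V}

theorem nonempty_claw_embedding_of_adj {c a b d : V}
    (hca : G.Adj c a) (hcb : G.Adj c b) (hcd : G.Adj c d)
    (hab : ¬ G.Adj a b) (had : ¬ G.Adj a d) (hbd : ¬ G.Adj b d)
    (nab : a ≠ b) (nad : a ≠ d) (nbd : b ≠ d) : Nonempty (claw ↪g G) := by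
  refine ⟨⟨⟨![c, a, b, d], fun i j h => ?_⟩, fun {i j} => ?_⟩⟩
  · fin_cases i <;> fin_cases j <;> simp_all [hca.ne, hcb.ne, hcd.ne, hca.ne', hcb.ne', hcd.ne']
  · change G.Adj (![c, a, b, d] i) (![c, a, b, d] j) ↔ _
    fin_cases i <;> fin_cases j <;> simp [claw, *, G.adj_comm]

theorem nonempty_bull_embedding_of_adj {a b c d e : V}
    (hab : G.Adj a b) (hbc : G.Adj b c) (hcd : G.Adj c d) (hde : G.Adj d e) (hbd : G.Adj b d)
    (nac : ¬ G.Adj a c) (nad : ¬ G.Adj a d) (nae : ¬ G.Adj a e) (nbe : ¬ G.Adj b e)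
    (nce : ¬ G.Adj c e) (dac : a ≠ c) (dad : a ≠ d) (dae : a ≠ e) (dbe : b ≠ e) (dce : c ≠ e) :
    Nonempty (bull ↪g G) := by
  refine ⟨⟨⟨![a, b, c, d, e], fun i j h => ?_⟩, fun {i j} => ?_⟩⟩
  · fin_cases i <;> fin_cases j <;>
      simp_all [hab.ne, hbc.ne, hcd.ne, hde.ne, hbd.ne, hab.ne', hbc.ne', hcd.ne', hde.ne', hbd.ne']
  · change G.Adj (![a, b, c, d, e] i) (![a, b, c, d, e] j) ↔ _
    fin_cases i <;> fin_cases j <;> simp [bull, *, G.adj_comm]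

theorem Preconnected.mem_of_adj_closed (hG : G.Preconnected) {S : Set V}
    (hS : ∀ ⦃u w⦄, u ∈ S → G.Adj u w → w ∈ S) {u : V} (hu : u ∈ S) (w : V) : w ∈ S := by
  obtain ⟨W⟩ := hG u w
  induction W with
  | nil => exact hu
  | cons h _ ih => exact ih (hS hu h)

end SimpleGraph

open Fin.NatCast in
theorem Fin.exists_add_one_iff_of_odd {p : ℕ} [NeZero p] (hodd : Odd p) (P : Fin p → Prop) :
    ∃ a, (P (a + 1) ↔ P a) := by
  by_contra! h
  have flip (a : Fin p) : P (a + 1) ↔ ¬ P a := by have := h a; tauto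
  have alternate (n : ℕ) (a : Fin p) : P (a + n) ↔ (Even n ↔ P a) := by
    induction n with
    | zero => simp
    | succ n ih => rw [Nat.cast_succ, ← add_assoc, flip, ih, Nat.even_add_one]; tauto
  have := alternate p 0
  rw [Fin.natCast_self, add_zero] at this
  exact Nat.not_even_iff_odd.2 hodd (by tauto)

namespace Antihole

variable {p : ℕ} [NeZero p] {V : Type*} {G : SimpleGraph V}

theorem compl_cycleG_adj_iff {i j : Fin p} :
    (cycleG p)ᶜ.Adj i j ↔ i ≠ j ∧ i + 1 ≠ j ∧ j + 1 ≠ i := by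
  simp only [compl_adj, cycleG]
  tauto

def rotation (s : Fin p) : (cycleG p)ᶜ ↪g (cycleG p)ᶜ where
  toFun i := s + i
  inj' := add_right_injective s
  map_rel_iff' {a b} := by
    change (cycleG p)ᶜ.Adj (s + a) (s + b) ↔ _
    simp only [compl_cycleG_adj_iff, add_assoc, ne_eq, add_right_inj]

theorem range_comp_rotation (f : (cycleG p)ᶜ ↪g G) (s : Fin p) :
    Set.range (f.comp (rotation s)) = Set.range f :=
  (add_left_surjective s).range_comp f

theorem path_two_zero_three_one (hp : 5 ≤ p) (f : (cycleG p)ᶜ ↪g G) :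
    G.Adj (f 0) (f 2) ∧ G.Adj (f 0) (f 3) ∧ G.Adj (f 1) (f 3) ∧
      ¬ G.Adj (f 0) (f 1) ∧ ¬ G.Adj (f 1) (f 2) ∧ ¬ G.Adj (f 2) (f 3) ∧
      f 0 ≠ f 1 ∧ f 1 ≠ f 2 ∧ f 2 ≠ f 3 := by
  simp only [f.map_adj_iff, ne_eq, EmbeddingLike.apply_eq_iff_eq, compl_cycleG_adj_iff]
  simp (disch := omega) [Fin.ext_iff, Fin.val_add, Nat.mod_eq_of_lt]

variable (f : (cycleG p)ᶜ ↪g G) {v : V}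

theorem eq_zero_or_eq_three_of_adj (hp : 5 ≤ p) (hclaw : ¬ Nonempty (claw ↪g G))
    (hv : v ∉ Set.range f) (h1 : ¬ G.Adj (f 1) v) (h2 : ¬ G.Adj (f 2) v) {j : Fin p}
    (hj : G.Adj (f j) v) :
    j = 0 ∨ j = 3 := by
  by_contra! hj03
  have hj1 : j ≠ 1 := by rintro rfl; exact h1 hj
  have hj2 : j ≠ 2 := by rintro rfl; exact h2 hj
  have e2 : (1 : Fin p) + 1 = 2 := Fin.ext (by simp [Fin.val_add])
  have e3 : (2 : Fin p) + 1 = 3 := Fin.ext (by simp [Fin.val_add])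
  have adj1 : (cycleG p)ᶜ.Adj j 1 := compl_cycleG_adj_iff.2
    ⟨hj1, fun h => hj03.1 (add_eq_right.1 h), fun h => hj2 (h.symm.trans e2)⟩
  have adj2 : (cycleG p)ᶜ.Adj j 2 := compl_cycleG_adj_iff.2
    ⟨hj2, fun h => hj1 (add_right_cancel (h.trans e2.symm)), fun h => hj03.2 (h.symm.trans e3)⟩
  obtain ⟨-, -, -, -, n12, -, -, d12, -⟩ := path_two_zero_three_one hp f
  exact hclaw (nonempty_claw_embedding_of_adj hj (f.map_adj_iff.2 adj1) (f.map_adj_iff.2 adj2)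
    (fun h => h1 h.symm) (fun h => h2 h.symm) n12
    (ne_of_mem_of_not_mem (Set.mem_range_self 1) hv).symm
    (ne_of_mem_of_not_mem (Set.mem_range_self 2) hv).symm d12)

theorem adj_one_or_adj_two (hp : 5 ≤ p) (hbull : ¬ Nonempty (bull ↪g G))
    (hclaw : ¬ Nonempty (claw ↪g G)) (hv : v ∉ Set.range f) (hnbr : ∃ i, G.Adj (f i) v) :
    G.Adj (f 1) v ∨ G.Adj (f 2) v := by
  by_contra! ⟨h1, h2⟩
  obtain ⟨a02, a03, a13, n01, n12, n23, d01, d12, d23⟩ := path_two_zero_three_one hp f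
  have hvf (i : Fin p) : f i ≠ v := ne_of_mem_of_not_mem (Set.mem_range_self i) hv
  by_cases h0 : G.Adj (f 0) v <;> by_cases h3 : G.Adj (f 3) v
  · -- the bull `f 2 - f 0 - v - f 3 - f 1`
    exact hbull (nonempty_bull_embedding_of_adj a02.symm h0 h3.symm a13.symm a03
      h2 n23 (fun h => n12 h.symm) n01 (fun h => h1 h.symm) (hvf 2) d23 d12.symm d01 (hvf 1).symm)
  · exact hclaw (nonempty_claw_embedding_of_adj h0 a02 a03 (fun h => h2 h.symm)
      (fun h => h3 h.symm) n23 (hvf 2).symm (hvf 3).symm d23)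
  · exact hclaw (nonempty_claw_embedding_of_adj h3 a13.symm a03.symm (fun h => h1 h.symm)
      (fun h => h0 h.symm) (fun h => n01 h.symm) (hvf 1).symm (hvf 0).symm d01.symm)
  · obtain ⟨j, hj⟩ := hnbr
    rcases eq_zero_or_eq_three_of_adj f hp hclaw hv h1 h2 hj with rfl | rfl
    exacts [h0 hj, h3 hj]

theorem adj_or_adj_add_one (hp : 5 ≤ p) (hbull : ¬ Nonempty (bull ↪g G))
    (hclaw : ¬ Nonempty (claw ↪g G)) (hv : v ∉ Set.range f) (hnbr : ∃ i, G.Adj (f i) v)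
    (k : Fin p) : G.Adj (f k) v ∨ G.Adj (f (k + 1)) v := by
  obtain ⟨i, hi⟩ := hnbr
  have := adj_one_or_adj_two (f.comp (rotation (k - 1))) hp hbull hclaw
    (by rwa [range_comp_rotation]) ⟨i - (k - 1), by simpa [rotation]⟩
  simpa [rotation, show k - 1 + 2 = k + 1 by grind] using this

theorem exists_adj_adj_add_one (hp : 5 ≤ p) (hodd : Odd p) (hbull : ¬ Nonempty (bull ↪g G))
    (hclaw : ¬ Nonempty (claw ↪g G)) (hv : v ∉ Set.range f) (hnbr : ∃ i, G.Adj (f i) v) :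
    ∃ a, G.Adj (f a) v ∧ G.Adj (f (a + 1)) v := by
  obtain ⟨a, ha⟩ := Fin.exists_add_one_iff_of_odd hodd (fun i => G.Adj (f i) v)
  have := adj_or_adj_add_one f hp hbull hclaw hv hnbr a
  exact ⟨a, by tauto⟩

theorem consecutive_ne_and_not_adj (hp : 2 ≤ p) (a : Fin p) :
    f a ≠ f (a + 1) ∧ ¬ G.Adj (f a) (f (a + 1)) := by
  refine ⟨f.injective.ne ?_, fun h => (compl_cycleG_adj_iff.1 (f.map_adj_iff.1 h)).2.1 rfl⟩
  simp (disch := omega) [Fin.ext_iff, Nat.mod_eq_of_lt]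

theorem exists_adj_of_connected (hp : 5 ≤ p) (hodd : Odd p) (hconn : G.Connected)
    (hbull : ¬ Nonempty (bull ↪g G)) (hclaw : ¬ Nonempty (claw ↪g G)) (hv : v ∉ Set.range f) :
    ∃ i, G.Adj (f i) v := by
  by_contra hnone
  let S : Set V := {u | u ∉ Set.range f ∧ ¬ ∃ i, G.Adj (f i) u}
  have hS : ∀ ⦃z u⦄, z ∈ S → G.Adj z u → u ∈ S := by
    rintro z u ⟨hz, hzQ⟩ hzu
    have hu : u ∉ Set.range f := by rintro ⟨i, rfl⟩; exact hzQ ⟨i, hzu.symm⟩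
    refine ⟨hu, fun huQ => ?_⟩
    obtain ⟨a, ha, ha1⟩ := exists_adj_adj_add_one f hp hodd hbull hclaw hu huQ
    obtain ⟨d, n⟩ := consecutive_ne_and_not_adj f (by omega) a
    exact hclaw (nonempty_claw_embedding_of_adj hzu.symm ha.symm ha1.symm
      (fun h => hzQ ⟨a, h.symm⟩) (fun h => hzQ ⟨a + 1, h.symm⟩) n
      (ne_of_mem_of_not_mem (Set.mem_range_self a) hz).symm
      (ne_of_mem_of_not_mem (Set.mem_range_self (a + 1)) hz).symm d)
  exact (hconn.preconnected.mem_of_adj_closed hS ⟨hv, hnone⟩ (f 0)).1 ⟨0, rfl⟩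

theorem adj_of_adj_zero_of_not_adj_one (hp : 5 ≤ p) (hbull : ¬ Nonempty (bull ↪g G))
    (hclaw : ¬ Nonempty (claw ↪g G)) {w w' : V} (hne : w ≠ w')
    (hw : w ∉ Set.range f) (hw' : w' ∉ Set.range f)
    (h0 : G.Adj (f 0) w) (h0' : G.Adj (f 0) w') (h1 : ¬ G.Adj (f 1) w) (h1' : ¬ G.Adj (f 1) w') :
    G.Adj w w' := by
  by_contra hww
  obtain ⟨-, a03, a13, n01, -, -, d01, -, -⟩ := path_two_zero_three_one hp f
  have hwf (i : Fin p) : f i ≠ w := ne_of_mem_of_not_mem (Set.mem_range_self i) hw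
  have hw'f (i : Fin p) : f i ≠ w' := ne_of_mem_of_not_mem (Set.mem_range_self i) hw'
  by_cases h3 : G.Adj (f 3) w <;> by_cases h3' : G.Adj (f 3) w'
  · exact hclaw (nonempty_claw_embedding_of_adj h3 h3' a13.symm hww (fun h => h1 h.symm)
      (fun h => h1' h.symm) hne (hwf 1).symm (hw'f 1).symm)
  · -- the bull `f 1 - f 3 - w - f 0 - w'`
    exact hbull (nonempty_bull_embedding_of_adj a13 h3 h0.symm h0' a03.symm
      h1 (fun h => n01 h.symm) h1' h3' hww (hwf 1) d01.symm (hw'f 1) (hw'f 3) hne)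
  · exact hbull (nonempty_bull_embedding_of_adj a13 h3' h0'.symm h0 a03.symm
      h1' (fun h => n01 h.symm) h1 h3 (fun h => hww h.symm) (hw'f 1) d01.symm (hwf 1) (hwf 3)
      hne.symm)
  · exact hclaw (nonempty_claw_embedding_of_adj h0 h0' a03 hww (fun h => h3 h.symm)
      (fun h => h3' h.symm) hne (hwf 3).symm (hw'f 3).symm)

theorem adj_of_common_non_adj (hp : 5 ≤ p) (hbull : ¬ Nonempty (bull ↪g G))
    (hclaw : ¬ Nonempty (claw ↪g G)) {w w' : V} (hne : w ≠ w')
    (hw : w ∉ Set.range f) (hw' : w' ∉ Set.range f)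
    (hnbr : ∃ i, G.Adj (f i) w) (hnbr' : ∃ i, G.Adj (f i) w')
    {i : Fin p} (hi : ¬ G.Adj (f i) w) (hi' : ¬ G.Adj (f i) w') : G.Adj w w' := by
  have h0 := (adj_or_adj_add_one f hp hbull hclaw hw hnbr (i - 1)).resolve_right
    (by rwa [sub_add_cancel])
  have h0' := (adj_or_adj_add_one f hp hbull hclaw hw' hnbr' (i - 1)).resolve_right
    (by rwa [sub_add_cancel])
  refine adj_of_adj_zero_of_not_adj_one (f.comp (rotation (i - 1))) hp hbull hclaw hne
    (by rwa [range_comp_rotation]) (by rwa [range_comp_rotation]) ?_ ?_ ?_ ?_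
    <;> simp [rotation, h0, h0', hi, hi']

end Antihole

theorem outside_vertices_adjacent_general {V : Type*} (G : SimpleGraph V)
    (hconn : G.Connected)
    (hbull : ¬ Nonempty (bull ↪g G)) (hclaw : ¬ Nonempty (claw ↪g G))
    (p : ℕ) [NeZero p] (hodd : Odd p) (hp : 5 ≤ p)
    (f : (cycleG p)ᶜ ↪g G)
    (w w' : V) (hne : w ≠ w')
    (hw : w ∉ Set.range f) (hw' : w' ∉ Set.range f)
    (hmiss : ∃ i : Fin p, ¬ G.Adj (f i) w ∧ ¬ G.Adj (f i) w') :
    G.Adj w w' := by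
  obtain ⟨i, hi, hi'⟩ := hmiss
  exact Antihole.adj_of_common_non_adj f hp hbull hclaw hne hw hw'
    (Antihole.exists_adj_of_connected f hp hodd hconn hbull hclaw hw)
    (Antihole.exists_adj_of_connected f hp hodd hconn hbull hclaw hw') hi hi'

theorem outside_vertices_adjacent {V : Type*} [Fintype V] (G : SimpleGraph V)
    (hconn : G.Connected)
    (hbull : ¬ Nonempty (bull ↪g G)) (hclaw : ¬ Nonempty (claw ↪g G))
    (p : ℕ) [NeZero p] (hodd : Odd p) (hp : 5 ≤ p)
    (f : (cycleG p)ᶜ ↪g G)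
    (w w' : V) (hne : w ≠ w')
    (hw : w ∉ Set.range f) (hw' : w' ∉ Set.range f)
    (hmiss : ∃ i : Fin p, ¬ G.Adj (f i) w ∧ ¬ G.Adj (f i) w') :
    G.Adj w w' :=
  outside_vertices_adjacent_general G hconn hbull hclaw p hodd hp f w w' hne hw hw' hmiss
end

section
/- Let G be a (bull, chair)-free graph containing an induced odd cycle Q = v_1 v_2 … v_p v_1 of length p ≥ 7 (p odd). For each i (modulo p), let A_i be the set of vertices w ∉ Q whose neighborhood in Q is exactly {v_{i-1}, v_i, v_{i+1}}. Then: (a) any two distinct vertices of A_i ∪ {v_i} are adjacent; (b) every vertex of A_i ∪ {v_i} is adjacent to every vertex of A_{i+1} ∪ {v_{i+1}}; (c) if j ∉ {i−1, i, i+1} (mod p), then no vertex of A_i ∪ {v_i} is adjacent to any vertex of A_j ∪ {v_j}. Consequently, the subgraph of G induced by Q ∪ A_1 ∪ … ∪ A_p is isomorphic to the clique expansion C_p[1+|A_1|, …, 1+|A_p|]. -/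
open SimpleGraph Finset

/-- The vertices outside the cycle whose neighborhood on the cycle is exactly
`{v (i-1), v i, v (i+1)}`. -/
def AsetI {V : Type*} (G : SimpleGraph V) {p : ℕ} [NeZero p] (v : Fin p → V)
    (i : Fin p) : Set V :=
  {w | (∀ j, w ≠ v j) ∧ ∀ j : Fin p, G.Adj w (v j) ↔ (j = i - 1 ∨ j = i ∨ j = i + 1)}

/-- The vertices outside the cycle whose neighborhood on the cycle is exactly
`{v (i-1), v i, v (i+1)}` for some `i`. -/
def Aset {V : Type*} (G : SimpleGraph V) {p : ℕ} [NeZero p] (v : Fin p → V) : Set V :=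
  ⋃ i : Fin p, AsetI G v i

/-- The vertices outside the cycle adjacent to all vertices of the cycle. -/
def Dset {V : Type*} (G : SimpleGraph V) {p : ℕ} (v : Fin p → V) : Set V :=
  {w | (∀ j, w ≠ v j) ∧ ∀ j : Fin p, G.Adj w (v j)}

/-!
Fix `w ∈ A_i` and `w' ∈ A_j`. Read from `v_{i-1}` onwards, the cycle is an induced path to which
`w` and `w'` are attached at three consecutive vertices each. If `j = i` and `w ≁ w'`, then
`v_{i+1}` with `w, w', v_{i+2}` and the pendant `v_{i+3}` is a chair; if `j = i + 1` and `w ≁ w'`,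
then `v_{i+3} v_{i+2} w' v_{i+1} w` is a bull; if `j = i + 2` and `w ∼ w'`, then
`v_{i-1} w v_{i+1} w' v_{i+3}` is a bull; and if `j` is farther away and `w ∼ w'`, then `w` with
`v_{i-1}, v_{i+1}, w'` and the pendant `v_j` is a chair. Hence adjacency between
`A_i ∪ {v_i}` and `A_j ∪ {v_j}` is decided by whether `i` and `j` are equal or consecutive on the
cycle, which is exactly the adjacency of the clique expansion.
-/

open Fin.NatCast Function

section CyclicOffsets

variable {p : ℕ} [NeZero p]

lemma Fin.natCast_inj_of_lt {a b : ℕ} (ha : a < p) (hb : b < p) : (a : Fin p) = b ↔ a = b := by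
  rw [Fin.ext_iff, Fin.val_natCast, Fin.val_natCast, Nat.mod_eq_of_lt ha, Nat.mod_eq_of_lt hb]

lemma Fin.ne_add_one (hp : 2 ≤ p) (i : Fin p) : i ≠ i + 1 := by
  rw [Ne, left_eq_add, ← Nat.cast_one, ← Nat.cast_zero, Fin.natCast_inj_of_lt (by omega) (by omega)]
  omega

lemma Fin.exists_eq_add_natCast_or (i j : Fin p) :
    ∃ n : ℕ, 2 * n ≤ p ∧ (j = i + n ∨ i = j + n) := by
  rcases le_or_gt (2 * (j - i).val) p with h | h
  · exact ⟨_, h, Or.inl (by simp)⟩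
  · refine ⟨(i - j).val, ?_, Or.inr (by simp)⟩
    rw [← neg_sub, Fin.val_neg', Nat.mod_eq_of_lt (by omega)]
    omega

lemma Fin.near_add_natCast_iff (hp : 3 ≤ p) (i : Fin p) {n : ℕ} (hn : 2 * n ≤ p) :
    (i = i + n ∨ i + 1 = i + n ∨ i + n + 1 = i) ↔ n ≤ 1 := by
  have h0 : i = i + n ↔ ((0 : ℕ) : Fin p) = n := by rw [Nat.cast_zero, left_eq_add, eq_comm]
  have h1 : i + 1 = i + n ↔ ((1 : ℕ) : Fin p) = n := by rw [Nat.cast_one, add_right_inj]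
  have h2 : i + n + 1 = i ↔ ((n + 1 : ℕ) : Fin p) = ((0 : ℕ) : Fin p) := by
    rw [Nat.cast_zero, Nat.cast_succ, add_assoc, add_eq_left]
  rw [h0, h1, h2, Fin.natCast_inj_of_lt (by omega) (by omega),
    Fin.natCast_inj_of_lt (by omega) (by omega), Fin.natCast_inj_of_lt (by omega) (by omega)]
  omega

end CyclicOffsets

section InducedSubgraphs

variable {V : Type*} {G : SimpleGraph V}

lemma adj_iff_of_forall_lt_adj_iff {W : Type*} [LinearOrder W] {H : SimpleGraph W} {f : W → V}
    (h : ∀ a b, a < b → (G.Adj (f a) (f b) ↔ H.Adj a b)) (a b : W) :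
    G.Adj (f a) (f b) ↔ H.Adj a b := by
  rcases lt_trichotomy a b with hab | rfl | hab
  · exact h a b hab
  · simp
  · rw [G.adj_comm, H.adj_comm]
    exact h b a hab

lemma bull_eq_of_forall_adj_iff : ∀ a b : Fin 5, (∀ c, bull.Adj c a ↔ bull.Adj c b) → a = b := by
  simp only [bull, fromRel_adj]
  intro a b
  fin_cases a <;> fin_cases b <;> decide

lemma chair_eq_of_forall_adj_iff : ∀ a b : Fin 5, (∀ c, chair.Adj c a ↔ chair.Adj c b) →
    a = b ∨ a = 1 ∧ b = 2 ∨ a = 2 ∧ b = 1 := by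
  simp only [chair, fromRel_adj]
  intro a b
  fin_cases a <;> fin_cases b <;> decide

lemma nonempty_bull_embedding_s12 {x₀ x₁ x₂ x₃ x₄ : V}
    (h₀₁ : G.Adj x₀ x₁) (h₁₂ : G.Adj x₁ x₂) (h₂₃ : G.Adj x₂ x₃) (h₃₄ : G.Adj x₃ x₄)
    (h₁₃ : G.Adj x₁ x₃) (h₀₂ : ¬ G.Adj x₀ x₂) (h₀₃ : ¬ G.Adj x₀ x₃) (h₀₄ : ¬ G.Adj x₀ x₄)
    (h₁₄ : ¬ G.Adj x₁ x₄) (h₂₄ : ¬ G.Adj x₂ x₄) : Nonempty (bull ↪g G) := by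
  set f : Fin 5 → V := ![x₀, x₁, x₂, x₃, x₄]
  have hf : ∀ a b, G.Adj (f a) (f b) ↔ bull.Adj a b :=
    adj_iff_of_forall_lt_adj_iff fun a b hab => by
      fin_cases a <;> fin_cases b <;> simp_all [f, bull]
  refine ⟨⟨⟨f, fun a b hab => bull_eq_of_forall_adj_iff a b fun c => ?_⟩, hf _ _⟩⟩
  rw [← hf, ← hf, hab]

lemma nonempty_chair_embedding {x₀ x₁ x₂ x₃ x₄ : V}
    (h₀₁ : G.Adj x₀ x₁) (h₀₂ : G.Adj x₀ x₂) (h₀₃ : G.Adj x₀ x₃) (h₃₄ : G.Adj x₃ x₄)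
    (h₀₄ : ¬ G.Adj x₀ x₄) (h₁₂ : ¬ G.Adj x₁ x₂) (h₁₃ : ¬ G.Adj x₁ x₃) (h₁₄ : ¬ G.Adj x₁ x₄)
    (h₂₃ : ¬ G.Adj x₂ x₃) (h₂₄ : ¬ G.Adj x₂ x₄) (hne : x₁ ≠ x₂) : Nonempty (chair ↪g G) := by
  set f : Fin 5 → V := ![x₀, x₁, x₂, x₃, x₄]
  have hf : ∀ a b, G.Adj (f a) (f b) ↔ chair.Adj a b :=
    adj_iff_of_forall_lt_adj_iff fun a b hab => by
      fin_cases a <;> fin_cases b <;> simp_all [f, chair]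
  refine ⟨⟨⟨f, fun a b hab => ?_⟩, hf _ _⟩⟩
  obtain h | ⟨rfl, rfl⟩ | ⟨rfl, rfl⟩ :=
    chair_eq_of_forall_adj_iff a b fun c => by rw [← hf, ← hf, hab]
  · exact h
  · exact absurd hab hne
  · exact absurd hab.symm hne

lemma nonempty_induce_iUnion_iso_cliqueExpansion {p : ℕ} [NeZero p] {S : Fin p → Set V}
    {k : Fin p → ℕ} (hS : Pairwise (Disjoint on S)) [∀ i, Finite (S i)]
    (hk : ∀ i, Nat.card (S i) = k i)
    (hadj : ∀ ⦃i j x y⦄, x ∈ S i → y ∈ S j →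
      (G.Adj x y ↔ x ≠ y ∧ (i = j ∨ i + 1 = j ∨ j + 1 = i))) :
    Nonempty (G.induce (⋃ i, S i) ≃g cliqueExpansion p k) := by
  let e : (Σ i, Fin (k i)) ≃ ⋃ i, S i :=
    (Equiv.sigmaCongrRight fun i => (Finite.equivFinOfCardEq (hk i)).symm).trans
      (Set.unionEqSigmaOfDisjoint hS).symm
  have he : ∀ a, (e a : V) ∈ S a.1 := fun a => ((Finite.equivFinOfCardEq (hk a.1)).symm a.2).2
  refine ⟨(RelIso.mk e fun {a b} => ?_).symm⟩
  rw [induce_adj, hadj (he a) (he b), Ne, Subtype.coe_inj, e.injective.eq_iff]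
  rfl

end InducedSubgraphs

section InducedPath

variable {V : Type*} {G : SimpleGraph V} {u : ℕ → V} {n : ℕ} {w w' : V}

def IsInducedPathOn (G : SimpleGraph V) (u : ℕ → V) (n : ℕ) : Prop :=
  ∀ a ≤ n, ∀ c ≤ n, G.Adj (u a) (u c) ↔ a + 1 = c ∨ c + 1 = a

def AttachedAt (G : SimpleGraph V) (u : ℕ → V) (n k : ℕ) (w : V) : Prop :=
  ∀ d ≤ n, G.Adj w (u d) ↔ k ≤ d + 1 ∧ d ≤ k + 1

lemma IsInducedPathOn.adj_iff (hu : IsInducedPathOn G u n) {a c : ℕ} (ha : a ≤ n) (hc : c ≤ n) :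
    G.Adj (u a) (u c) ↔ a + 1 = c ∨ c + 1 = a :=
  hu a ha c hc

lemma AttachedAt.adj_iff {k : ℕ} (hw : AttachedAt G u n k w) {d : ℕ} (hd : d ≤ n) :
    G.Adj w (u d) ↔ k ≤ d + 1 ∧ d ≤ k + 1 :=
  hw d hd

lemma AttachedAt.adj_iff' {k : ℕ} (hw : AttachedAt G u n k w) {d : ℕ} (hd : d ≤ n) :
    G.Adj (u d) w ↔ k ≤ d + 1 ∧ d ≤ k + 1 := by
  rw [G.adj_comm, hw d hd]

lemma adj_of_attachedAt_one_of_ne (hchair : ¬ Nonempty (chair ↪g G)) (hu : IsInducedPathOn G u n)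
    (hn : 4 ≤ n) (hw : AttachedAt G u n 1 w) (hw' : AttachedAt G u n 1 w') (hne : w ≠ w') :
    G.Adj w w' := by
  by_contra h
  refine hchair (nonempty_chair_embedding (x₀ := u 2) (x₁ := w) (x₂ := w') (x₃ := u 3) (x₄ := u 4)
    ?_ ?_ ?_ ?_ ?_ h ?_ ?_ ?_ ?_ hne)
  all_goals simp (disch := omega) [hu.adj_iff, hw.adj_iff, hw.adj_iff', hw'.adj_iff, hw'.adj_iff']

lemma adj_of_attachedAt_one_of_attachedAt_two (hbull : ¬ Nonempty (bull ↪g G))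
    (hu : IsInducedPathOn G u n) (hn : 4 ≤ n) (hw : AttachedAt G u n 1 w)
    (hw' : AttachedAt G u n 2 w') : G.Adj w w' := by
  by_contra h
  refine hbull (nonempty_bull_embedding_s12 (x₀ := u 4) (x₁ := u 3) (x₂ := w') (x₃ := u 2) (x₄ := w)
    ?_ ?_ ?_ ?_ ?_ ?_ ?_ ?_ ?_ fun h' => h h'.symm)
  all_goals simp (disch := omega) [hu.adj_iff, hw.adj_iff', hw'.adj_iff, hw'.adj_iff']

lemma not_adj_of_attachedAt_one_of_attachedAt_three (hbull : ¬ Nonempty (bull ↪g G))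
    (hu : IsInducedPathOn G u n) (hn : 4 ≤ n) (hw : AttachedAt G u n 1 w)
    (hw' : AttachedAt G u n 3 w') : ¬ G.Adj w w' := by
  intro h
  refine hbull (nonempty_bull_embedding_s12 (x₀ := u 0) (x₁ := w) (x₂ := u 2) (x₃ := w') (x₄ := u 4)
    ?_ ?_ ?_ ?_ h ?_ ?_ ?_ ?_ ?_)
  all_goals simp (disch := omega) [hu.adj_iff, hw.adj_iff, hw.adj_iff', hw'.adj_iff, hw'.adj_iff']

lemma not_adj_of_attachedAt_one_of_attachedAt (hchair : ¬ Nonempty (chair ↪g G))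
    (hu : IsInducedPathOn G u n) {k : ℕ} (hk : 4 ≤ k) (hkn : k ≤ n) (hw : AttachedAt G u n 1 w)
    (hw' : AttachedAt G u n k w') : ¬ G.Adj w w' := by
  intro h
  have h₀₂ : u 0 ≠ u 2 := fun h₀₂ => by
    have h₃₂ := (hu.adj_iff (a := 3) (c := 2) (by omega) (by omega)).2 (by omega)
    rw [← h₀₂, hu.adj_iff (by omega) (by omega)] at h₃₂
    omega
  refine hchair (nonempty_chair_embedding (x₀ := w) (x₁ := u 0) (x₂ := u 2) (x₃ := w') (x₄ := u k)
    ?_ ?_ h ?_ ?_ ?_ ?_ ?_ ?_ ?_ h₀₂)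
  all_goals simp (disch := omega) [hu.adj_iff, hw.adj_iff, hw'.adj_iff, hw'.adj_iff']
  all_goals omega

lemma adj_iff_of_attachedAt (hbull : ¬ Nonempty (bull ↪g G)) (hchair : ¬ Nonempty (chair ↪g G))
    (hu : IsInducedPathOn G u n) (hn : 4 ≤ n) {k : ℕ} (hk : k + 1 ≤ n)
    (hw : AttachedAt G u n 1 w) (hw' : AttachedAt G u n (k + 1) w') :
    G.Adj w w' ↔ w ≠ w' ∧ k ≤ 1 := by
  match k, hw' with
  | 0, hw' =>
    exact ⟨fun h => ⟨h.ne, zero_le_one⟩,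
      fun h => adj_of_attachedAt_one_of_ne hchair hu hn hw hw' h.1⟩
  | 1, hw' =>
    have h := adj_of_attachedAt_one_of_attachedAt_two hbull hu hn hw hw'
    exact iff_of_true h ⟨h.ne, le_rfl⟩
  | 2, hw' =>
    exact iff_of_false (not_adj_of_attachedAt_one_of_attachedAt_three hbull hu hn hw hw') (by simp)
  | k + 3, hw' =>
    exact iff_of_false (not_adj_of_attachedAt_one_of_attachedAt hchair hu (by omega) hk hw hw')
      (by simp)

end InducedPath

section InducedOddCycle

variable {V : Type*} {G : SimpleGraph V} {p : ℕ} [NeZero p] {v : Fin p → V} {w w' : V}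

lemma isInducedPathOn_add_natCast (hv : ∀ i j : Fin p, G.Adj (v i) (v j) ↔ (cycleG p).Adj i j)
    (b : Fin p) {n : ℕ} (hn : n + 2 ≤ p) : IsInducedPathOn G (fun a : ℕ => v (b + a)) n := by
  intro a ha c hc
  have e : ∀ x : ℕ, b + (x : Fin p) + 1 = b + ((x + 1 : ℕ) : Fin p) := fun x => by
    rw [Nat.cast_succ, add_assoc]
  rw [hv]
  change (b + a ≠ b + c ∧ (b + a + 1 = b + c ∨ b + c + 1 = b + a)) ↔ _
  simp (disch := omega) only [e, ne_eq, add_right_inj, Fin.natCast_inj_of_lt]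
  omega

/-- Offsets are measured from `v (i - 1)`, so that all neighbours of `w` on the cycle sit at
nonnegative offsets. -/
lemma attachedAt_of_mem_AsetI_add (i : Fin p) {m : ℕ} (hm : m + 3 ≤ p)
    (hw : w ∈ AsetI G v (i + m)) : AttachedAt G (fun a : ℕ => v (i - 1 + a)) (p - 2) (m + 1) w := by
  intro d hd
  have e₁ : i + (m : Fin p) - 1 = i - 1 + m := by abel
  have e₂ : i + (m : Fin p) = i - 1 + ((m + 1 : ℕ) : Fin p) := by push_cast; abel
  have e₃ : i + (m : Fin p) + 1 = i - 1 + ((m + 1 + 1 : ℕ) : Fin p) := by push_cast; abel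
  rw [hw.2, e₃, e₁, e₂]
  simp (disch := omega) only [add_right_inj, Fin.natCast_inj_of_lt]
  omega

lemma eq_zero_of_mem_AsetI_of_mem_AsetI_add (hp : 6 ≤ p) {i : Fin p} {m : ℕ} (hm : 2 * m ≤ p)
    (hw : w ∈ AsetI G v i) (hw' : w ∈ AsetI G v (i + m)) : m = 0 := by
  have h₁ := attachedAt_of_mem_AsetI_add i (m := 0) (by omega) (by simpa using hw)
  have h₂ := attachedAt_of_mem_AsetI_add i (by omega) hw'
  have := (h₂.adj_iff (d := 0) (by omega)).1 ((h₁.adj_iff (by omega)).2 (by omega))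
  omega

lemma eq_of_mem_AsetI_of_mem_AsetI (hp : 6 ≤ p) {i j : Fin p} (hw : w ∈ AsetI G v i)
    (hw' : w ∈ AsetI G v j) : i = j := by
  obtain ⟨m, hm, rfl | rfl⟩ := Fin.exists_eq_add_natCast_or i j
  · simp [eq_zero_of_mem_AsetI_of_mem_AsetI_add hp hm hw hw']
  · simp [eq_zero_of_mem_AsetI_of_mem_AsetI_add hp hm hw' hw]

lemma adj_iff_of_mem_AsetI_of_mem_AsetI_add (hbull : ¬ Nonempty (bull ↪g G))
    (hchair : ¬ Nonempty (chair ↪g G)) (hv : ∀ i j : Fin p, G.Adj (v i) (v j) ↔ (cycleG p).Adj i j)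
    (hp : 6 ≤ p) {i : Fin p} {m : ℕ} (hm : 2 * m ≤ p) (hw : w ∈ AsetI G v i)
    (hw' : w' ∈ AsetI G v (i + m)) : G.Adj w w' ↔ w ≠ w' ∧ m ≤ 1 :=
  adj_iff_of_attachedAt hbull hchair (isInducedPathOn_add_natCast hv (i - 1) (by omega))
    (by omega) (by omega) (attachedAt_of_mem_AsetI_add i (m := 0) (by omega) (by simpa using hw))
    (attachedAt_of_mem_AsetI_add i (by omega) hw')

lemma adj_iff_of_mem_AsetI (hbull : ¬ Nonempty (bull ↪g G)) (hchair : ¬ Nonempty (chair ↪g G))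
    (hv : ∀ i j : Fin p, G.Adj (v i) (v j) ↔ (cycleG p).Adj i j) (hp : 6 ≤ p) {i j : Fin p}
    (hw : w ∈ AsetI G v i) (hw' : w' ∈ AsetI G v j) :
    G.Adj w w' ↔ w ≠ w' ∧ (i = j ∨ i + 1 = j ∨ j + 1 = i) := by
  obtain ⟨m, hm, rfl | rfl⟩ := Fin.exists_eq_add_natCast_or i j
  · rw [adj_iff_of_mem_AsetI_of_mem_AsetI_add hbull hchair hv hp hm hw hw',
      Fin.near_add_natCast_iff (by omega) i hm]
  · rw [G.adj_comm, ne_comm, adj_iff_of_mem_AsetI_of_mem_AsetI_add hbull hchair hv hp hm hw' hw,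
      ← Fin.near_add_natCast_iff (by omega) j hm, eq_comm (a := j + (m : Fin p))]
    tauto

lemma adj_v_iff_of_mem_AsetI {j : Fin p} (hw : w ∈ AsetI G v j) (i : Fin p) :
    G.Adj (v i) w ↔ v i ≠ w ∧ (i = j ∨ i + 1 = j ∨ j + 1 = i) := by
  rw [G.adj_comm, hw.2 i, eq_sub_iff_add_eq, eq_comm (a := i) (b := j + 1)]
  simp only [ne_eq, (hw.1 i).symm, not_false_eq_true, true_and]
  tauto

lemma adj_iff_of_mem_insert_AsetI (hbull : ¬ Nonempty (bull ↪g G))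
    (hchair : ¬ Nonempty (chair ↪g G)) (hv : ∀ i j : Fin p, G.Adj (v i) (v j) ↔ (cycleG p).Adj i j)
    (hvinj : Injective v) (hp : 6 ≤ p) {i j : Fin p} {x y : V}
    (hx : x ∈ insert (v i) (AsetI G v i)) (hy : y ∈ insert (v j) (AsetI G v j)) :
    G.Adj x y ↔ x ≠ y ∧ (i = j ∨ i + 1 = j ∨ j + 1 = i) := by
  rcases hx with rfl | hx <;> rcases hy with rfl | hy
  · rw [hv, hvinj.ne_iff]
    change (i ≠ j ∧ (i + 1 = j ∨ j + 1 = i)) ↔ _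
    tauto
  · exact adj_v_iff_of_mem_AsetI hy i
  · rw [G.adj_comm, ne_comm, adj_v_iff_of_mem_AsetI hx j, eq_comm (a := j)]
    tauto
  · exact adj_iff_of_mem_AsetI hbull hchair hv hp hx hy

lemma pairwise_disjoint_insert_AsetI (hvinj : Injective v) (hp : 6 ≤ p) :
    Pairwise (Disjoint on fun i => insert (v i) (AsetI G v i)) := by
  intro i j hij
  refine Set.disjoint_left.2 fun x hxi hxj => hij ?_
  rcases hxi with rfl | hxi <;> rcases hxj with h | hxj
  · exact hvinj h
  · exact absurd rfl (hxj.1 i)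
  · exact absurd h (hxi.1 j)
  · exact eq_of_mem_AsetI_of_mem_AsetI hp hxi hxj

end InducedOddCycle

theorem cycle_with_A_is_clique_expansion_general {V : Type*} [Fintype V] (G : SimpleGraph V)
    (hbull : ¬ Nonempty (bull ↪g G)) (hchair : ¬ Nonempty (chair ↪g G))
    (p : ℕ) [NeZero p] (hp : 7 ≤ p)
    (v : Fin p → V) (hvinj : Function.Injective v)
    (hv : ∀ i j : Fin p, G.Adj (v i) (v j) ↔ (cycleG p).Adj i j) :
    (∀ i : Fin p, ∀ x ∈ insert (v i) (AsetI G v i), ∀ y ∈ insert (v i) (AsetI G v i),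
      x ≠ y → G.Adj x y) ∧
    (∀ i : Fin p, ∀ x ∈ insert (v i) (AsetI G v i),
      ∀ y ∈ insert (v (i + 1)) (AsetI G v (i + 1)), G.Adj x y) ∧
    (∀ i j : Fin p, j ≠ i - 1 → j ≠ i → j ≠ i + 1 →
      ∀ x ∈ insert (v i) (AsetI G v i), ∀ y ∈ insert (v j) (AsetI G v j), ¬ G.Adj x y) ∧
    Nonempty ((G.induce (Set.range v ∪ Aset G v)) ≃g
      cliqueExpansion p (fun i => 1 + (AsetI G v i).ncard)) := by
  have hp₆ : 6 ≤ p := by omega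
  have hadj : ∀ ⦃i j : Fin p⦄ ⦃x y : V⦄, x ∈ insert (v i) (AsetI G v i) →
      y ∈ insert (v j) (AsetI G v j) → (G.Adj x y ↔ x ≠ y ∧ (i = j ∨ i + 1 = j ∨ j + 1 = i)) :=
    fun _ _ _ _ => adj_iff_of_mem_insert_AsetI hbull hchair hv hvinj hp₆
  have hdisj := pairwise_disjoint_insert_AsetI (G := G) hvinj hp₆
  refine ⟨fun i x hx y hy hxy => (hadj hx hy).2 ⟨hxy, Or.inl rfl⟩,
    fun i x hx y hy => (hadj hx hy).2 ⟨(hdisj (Fin.ne_add_one (by omega) i)).ne_of_mem hx hy,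
      Or.inr (Or.inl rfl)⟩,
    fun i j h₁ h₂ h₃ x hx y hy h => ?_, ?_⟩
  · rcases ((hadj hx hy).1 h).2 with h | h | h
    · exact h₂ h.symm
    · exact h₃ h.symm
    · exact h₁ (eq_sub_of_add_eq h)
  · have hU : Set.range v ∪ Aset G v = ⋃ i, insert (v i) (AsetI G v i) := by
      simp only [Set.insert_eq, Set.iUnion_union_distrib, Set.iUnion_singleton_eq_range, Aset]
    rw [hU]
    refine nonempty_induce_iUnion_iso_cliqueExpansion hdisj (fun i => ?_) hadj
    rw [Nat.card_coe_set_eq, Set.ncard_insert_of_notMem (fun h => h.1 i rfl), add_comm]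

theorem cycle_with_A_is_clique_expansion {V : Type*} [Fintype V] (G : SimpleGraph V)
    (hbull : ¬ Nonempty (bull ↪g G)) (hchair : ¬ Nonempty (chair ↪g G))
    (p : ℕ) [NeZero p] (hodd : Odd p) (hp : 7 ≤ p)
    (v : Fin p → V) (hvinj : Function.Injective v)
    (hv : ∀ i j : Fin p, G.Adj (v i) (v j) ↔ (cycleG p).Adj i j) :
    (∀ i : Fin p, ∀ x ∈ insert (v i) (AsetI G v i), ∀ y ∈ insert (v i) (AsetI G v i),
      x ≠ y → G.Adj x y) ∧
    (∀ i : Fin p, ∀ x ∈ insert (v i) (AsetI G v i),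
      ∀ y ∈ insert (v (i + 1)) (AsetI G v (i + 1)), G.Adj x y) ∧
    (∀ i j : Fin p, j ≠ i - 1 → j ≠ i → j ≠ i + 1 →
      ∀ x ∈ insert (v i) (AsetI G v i), ∀ y ∈ insert (v j) (AsetI G v j), ¬ G.Adj x y) ∧
    Nonempty ((G.induce (Set.range v ∪ Aset G v)) ≃g
      cliqueExpansion p (fun i => 1 + (AsetI G v i).ncard)) :=
  cycle_with_A_is_clique_expansion_general G hbull hchair p hp v hvinj hv
end

section
/- Let G be a (bull, chair)-free graph containing an induced odd cycle Q = v_1 v_2 … v_p v_1 of length p ≥ 7 (p odd). Let A be the set of vertices w ∉ Q whose neighborhood in Q is exactly {v_{i-1}, v_i, v_{i+1}} for some i (modulo p), and let D be the set of vertices w ∉ Q adjacent to every vertex of Q. Then no vertex of A has a neighbor in V(G) ∖ (Q ∪ A ∪ D); in particular, D separates Q from G ∖ (Q ∪ A ∪ D). -/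
open SimpleGraph Finset

/-!
A vertex `u ∉ Q` with a neighbour on `Q` already lies in `A ∪ D`. If `u` has no two consecutive
neighbours on `Q`, a chair turns every neighbour `v_j` into a neighbour `v_{j+2}`; as `p` is odd,
this walks around `Q` onto a consecutive pair after all. If `u` sees `v_j, v_{j+1}` but not
`v_{j+2}`, a bull forces `u ∼ v_{j-1}`, and then bulls and a chair rule out every other neighbour,
so `u ∈ A`. Hence for `u ∉ A` a run of consecutive neighbours never stops, and `u ∈ D`. Finally, a
neighbour `u ∉ Q` of `w ∈ A` does see `Q`, as otherwise `w` would be the centre of a chair.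
-/

open Fin.CommRing Fin.NatCast

theorem add_nsmul_of_forall_add {M : Type*} [AddMonoid M] {P : M → Prop} {c x : M}
    (h : ∀ y, P y → P (y + c)) (hx : P x) : ∀ n : ℕ, P (x + n • c)
  | 0 => by simpa using hx
  | n + 1 => by
    rw [succ_nsmul, ← add_assoc]
    exact h _ (add_nsmul_of_forall_add h hx n)

namespace Fin

variable {p : ℕ} [NeZero p]

lemma natCast_inj_of_lt_s13 {a c : ℕ} (ha : a < p) (hc : c < p) : (a : Fin p) = c ↔ a = c := by
  rw [Fin.ext_iff, Fin.val_cast_of_lt ha, Fin.val_cast_of_lt hc]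

lemma nsmul_two_eq_one_of_odd (hodd : Odd p) : ((p + 1) / 2) • (2 : Fin p) = 1 := by
  obtain ⟨k, rfl⟩ := hodd
  rw [show (2 * k + 1 + 1) / 2 = k + 1 by omega, nsmul_eq_mul]
  have : ((2 * k + 1 : ℕ) : Fin (2 * k + 1)) = 0 := Fin.natCast_self _
  push_cast at this ⊢
  linear_combination this

end Fin

namespace SimpleGraph

variable {V : Type*} {G : SimpleGraph V}

theorem bull_isIndContained {x₀ x₁ x₂ x₃ x₄ : V}
    (h₀₁ : G.Adj x₀ x₁) (h₁₂ : G.Adj x₁ x₂) (h₂₃ : G.Adj x₂ x₃) (h₃₄ : G.Adj x₃ x₄)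
    (h₁₃ : G.Adj x₁ x₃) (h₀₂ : ¬ G.Adj x₀ x₂) (h₀₃ : ¬ G.Adj x₀ x₃) (h₀₄ : ¬ G.Adj x₀ x₄)
    (h₁₄ : ¬ G.Adj x₁ x₄) (h₂₄ : ¬ G.Adj x₂ x₄) : bull ⊴ G := by
  have hadj : ∀ a b, G.Adj (![x₀, x₁, x₂, x₃, x₄] a) (![x₀, x₁, x₂, x₃, x₄] b) ↔ bull.Adj a b := by
    intro a b
    fin_cases a <;> fin_cases b <;> simp [bull, G.adj_comm, *]
  refine ⟨⟨⟨![x₀, x₁, x₂, x₃, x₄], fun a b hab => ?_⟩, hadj _ _⟩⟩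
  fin_cases a <;> fin_cases b <;> simp_all [G.adj_comm]

theorem chair_isIndContained {x₀ x₁ x₂ x₃ x₄ : V} (hne₁₂ : x₁ ≠ x₂)
    (h₀₁ : G.Adj x₀ x₁) (h₀₂ : G.Adj x₀ x₂) (h₀₃ : G.Adj x₀ x₃) (h₃₄ : G.Adj x₃ x₄)
    (h₀₄ : ¬ G.Adj x₀ x₄) (h₁₂ : ¬ G.Adj x₁ x₂) (h₁₃ : ¬ G.Adj x₁ x₃) (h₁₄ : ¬ G.Adj x₁ x₄)
    (h₂₃ : ¬ G.Adj x₂ x₃) (h₂₄ : ¬ G.Adj x₂ x₄) : chair ⊴ G := by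
  have hadj : ∀ a b, G.Adj (![x₀, x₁, x₂, x₃, x₄] a) (![x₀, x₁, x₂, x₃, x₄] b) ↔ chair.Adj a b := by
    intro a b
    fin_cases a <;> fin_cases b <;> simp [chair, G.adj_comm, *]
  refine ⟨⟨⟨![x₀, x₁, x₂, x₃, x₄], fun a b hab => ?_⟩, hadj _ _⟩⟩
  fin_cases a <;> fin_cases b <;> simp_all [G.adj_comm]

def pathGraphShift {m n : ℕ} (a : ℕ) (h : m + a ≤ n) : pathGraph m ↪g pathGraph n where
  toFun k := ⟨k.val + a, by omega⟩
  inj' i j hij := by simpa [Fin.ext_iff] using hij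
  map_rel_iff' {i j} := by
    change (pathGraph n).Adj ⟨i.val + a, _⟩ ⟨j.val + a, _⟩ ↔ _
    simp only [pathGraph_adj]
    omega

@[simp] lemma pathGraphShift_apply {m n : ℕ} (a : ℕ) (h : m + a ≤ n) (k : Fin m) :
    pathGraphShift a h k = ⟨k.val + a, by omega⟩ := rfl

lemma Embedding.map_adj_pathGraph_iff {n : ℕ} (P : pathGraph n ↪g G) (a b : Fin n) :
    G.Adj (P a) (P b) ↔ a.val + 1 = b.val ∨ b.val + 1 = a.val :=
  P.map_adj_iff.trans pathGraph_adj

section InducedPath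

variable {u : V}

theorem adj_three_of_chair_free (hchair : ¬ chair ⊴ G) (P : pathGraph 4 ↪g G) (hu : u ≠ P 0)
    (h₀ : ¬ G.Adj u (P 0)) (h₁ : G.Adj u (P 1)) (h₂ : ¬ G.Adj u (P 2)) : G.Adj u (P 3) := by
  have hP := P.map_adj_pathGraph_iff
  by_contra h₃
  refine hchair (chair_isIndContained (x₀ := P 1) (x₁ := P 0) (x₂ := u) (x₃ := P 2) (x₄ := P 3)
    hu.symm ((hP 1 0).2 (by decide)) h₁.symm ((hP 1 2).2 (by decide)) ((hP 2 3).2 (by decide))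
    (mt (hP 1 3).1 (by decide)) (fun h => h₀ h.symm) (mt (hP 0 2).1 (by decide))
    (mt (hP 0 3).1 (by decide)) h₂ h₃)

theorem adj_zero_of_bull_free (hbull : ¬ bull ⊴ G) (P : pathGraph 4 ↪g G)
    (h₁ : G.Adj u (P 1)) (h₂ : G.Adj u (P 2)) (h₃ : ¬ G.Adj u (P 3)) : G.Adj u (P 0) := by
  have hP := P.map_adj_pathGraph_iff
  by_contra h₀
  exact hbull (bull_isIndContained (x₀ := P 0) (x₁ := P 1) (x₂ := u) (x₃ := P 2) (x₄ := P 3)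
    ((hP 0 1).2 (by decide)) h₁.symm h₂ ((hP 2 3).2 (by decide)) ((hP 1 2).2 (by decide))
    (fun h => h₀ h.symm) (mt (hP 0 2).1 (by decide)) (mt (hP 0 3).1 (by decide))
    (mt (hP 1 3).1 (by decide)) h₃)

theorem not_adj_of_bull_free (hbull : ¬ bull ⊴ G) (P : pathGraph 3 ↪g G)
    (h₀ : G.Adj u (P 0)) (h₁ : G.Adj u (P 1)) (h₂ : ¬ G.Adj u (P 2)) {x : V}
    (hx₀ : ¬ G.Adj x (P 0)) (hx₁ : ¬ G.Adj x (P 1)) (hx₂ : ¬ G.Adj x (P 2)) : ¬ G.Adj u x := by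
  have hP := P.map_adj_pathGraph_iff
  intro hx
  exact hbull (bull_isIndContained (x₀ := P 2) (x₁ := P 1) (x₂ := P 0) (x₃ := u) (x₄ := x)
    ((hP 2 1).2 (by decide)) ((hP 1 0).2 (by decide)) h₀.symm hx h₁.symm
    (mt (hP 2 0).1 (by decide)) (fun h => h₂ h.symm) (fun h => hx₂ h.symm) (fun h => hx₁ h.symm)
    (fun h => hx₀ h.symm))

theorem not_adj_three_of_bull_free_of_chair_free (hbull : ¬ bull ⊴ G) (hchair : ¬ chair ⊴ G)
    (P : pathGraph 6 ↪g G) (h₀ : G.Adj u (P 0)) (h₁ : G.Adj u (P 1)) (h₂ : ¬ G.Adj u (P 2)) :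
    ¬ G.Adj u (P 3) := by
  have hP := P.map_adj_pathGraph_iff
  have hfar : ∀ k : Fin 6, 3 < k.val → ¬ G.Adj u (P k) := fun k hk =>
    not_adj_of_bull_free hbull (P.comp (pathGraphShift 0 (by norm_num))) (by simpa using h₀)
      (by simpa using h₁) (by simpa using h₂) (mt (hP k 0).1 (by omega))
      (mt (hP k 1).1 (by omega)) (mt (hP k 2).1 (by omega))
  have hu : u ≠ P 2 := by
    rintro rfl
    exact mt (hP 2 0).1 (by decide) h₀
  intro h₃
  have := adj_three_of_chair_free hchair (P.comp (pathGraphShift 2 (by norm_num)))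
    (by simpa using hu) (by simpa using h₂) (by simpa using h₃) (by simpa using hfar 4 (by decide))
  exact hfar 5 (by decide) (by simpa using this)

theorem adj_three_of_adj_of_chair_free (hchair : ¬ chair ⊴ G) (P : pathGraph 4 ↪g G) {w : V}
    (hw₀ : G.Adj w (P 0)) (hw₂ : G.Adj w (P 2)) (hw₃ : ¬ G.Adj w (P 3)) (huw : G.Adj u w)
    (hu : u ≠ P 0) (h₀ : ¬ G.Adj u (P 0)) (h₂ : ¬ G.Adj u (P 2)) : G.Adj u (P 3) := by
  have hP := P.map_adj_pathGraph_iff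
  by_contra h₃
  exact hchair (chair_isIndContained (x₀ := w) (x₁ := u) (x₂ := P 0) (x₃ := P 2) (x₄ := P 3)
    hu huw.symm hw₀ hw₂ ((hP 2 3).2 (by decide)) hw₃ h₀ h₂ h₃
    (mt (hP 0 2).1 (by decide)) (mt (hP 0 3).1 (by decide)))

end InducedPath

section Cycle

variable {p : ℕ} [NeZero p]

def cycleArc (b : Fin p) {n : ℕ} (hn : n < p) : pathGraph n ↪g cycleG p where
  toFun k := b + (k.val : Fin p)
  inj' i j h := by
    simpa [Fin.natCast_inj_of_lt_s13 (i.2.trans hn) (j.2.trans hn), Fin.ext_iff] using h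
  map_rel_iff' {i j} := by
    have key : ∀ i j : Fin n, b + (i.val : Fin p) + 1 = b + j ↔ i.val + 1 = j.val := fun i j => by
      rw [add_assoc, add_right_inj, ← Nat.cast_succ,
        Fin.natCast_inj_of_lt_s13 (by omega) (j.2.trans hn)]
    change (cycleG p).Adj (b + (i.val : Fin p)) (b + j.val) ↔ _
    simp only [cycleG, key, pathGraph_adj, ne_eq, add_right_inj,
      Fin.natCast_inj_of_lt_s13 (i.2.trans hn) (j.2.trans hn), and_iff_right_iff_imp]
    omega

@[simp] lemma cycleArc_apply (b : Fin p) {n : ℕ} (hn : n < p) (k : Fin n) :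
    cycleArc b hn k = b + (k.val : Fin p) := rfl

variable (Q : cycleG p ↪g G) {u : V}

lemma comp_cycleArc_sub_one_apply (hp : 4 < p) (b : Fin p) :
    Q.comp (cycleArc (b - 1) hp) 0 = Q (b - 1) ∧ Q.comp (cycleArc (b - 1) hp) 1 = Q b ∧
      Q.comp (cycleArc (b - 1) hp) 2 = Q (b + 1) ∧ Q.comp (cycleArc (b - 1) hp) 3 = Q (b + 2) := by
  refine ⟨?_, ?_, ?_, ?_⟩ <;>
    simp only [Embedding.coe_comp, Function.comp_apply, cycleArc_apply] <;> congr 1 <;> simp <;> ring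

theorem adj_add_two_of_chair_free (hchair : ¬ chair ⊴ G) (hp : 4 < p) (hu : u ∉ Set.range Q)
    {b : Fin p} (h₀ : ¬ G.Adj u (Q (b - 1))) (h₁ : G.Adj u (Q b)) (h₂ : ¬ G.Adj u (Q (b + 1))) :
    G.Adj u (Q (b + 2)) := by
  obtain ⟨e₀, e₁, e₂, e₃⟩ := comp_cycleArc_sub_one_apply Q hp b
  rw [← e₃]
  exact adj_three_of_chair_free hchair _ (e₀ ▸ fun h => hu ⟨_, h.symm⟩) (e₀ ▸ h₀) (e₁ ▸ h₁)
    (e₂ ▸ h₂)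

theorem adj_sub_one_of_bull_free (hbull : ¬ bull ⊴ G) (hp : 4 < p) {b : Fin p}
    (h₁ : G.Adj u (Q b)) (h₂ : G.Adj u (Q (b + 1))) (h₃ : ¬ G.Adj u (Q (b + 2))) :
    G.Adj u (Q (b - 1)) := by
  obtain ⟨e₀, e₁, e₂, e₃⟩ := comp_cycleArc_sub_one_apply Q hp b
  rw [← e₀]
  exact adj_zero_of_bull_free hbull _ (e₁ ▸ h₁) (e₂ ▸ h₂) (e₃ ▸ h₃)

theorem mem_AsetI_of_adj (hbull : ¬ bull ⊴ G) (hchair : ¬ chair ⊴ G) (hp : 6 < p)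
    (hu : u ∉ Set.range Q) {i : Fin p} (h₀ : G.Adj u (Q (i - 1))) (h₁ : G.Adj u (Q i))
    (h₂ : G.Adj u (Q (i + 1))) (h₃ : ¬ G.Adj u (Q (i + 2))) : u ∈ AsetI G Q i := by
  -- `Q.comp (cycleArc i _) k` unfolds to `Q (i + k)` for numerals `k ≥ 1`; `k = 0` needs `simp`.
  have h₄ : ¬ G.Adj u (Q (i + 3)) :=
    not_adj_three_of_bull_free_of_chair_free hbull hchair (Q.comp (cycleArc i hp))
      (by simpa using h₁) h₂ h₃
  refine ⟨fun j h => hu ⟨j, h.symm⟩, fun m => ⟨fun hm => ?_, ?_⟩⟩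
  · by_contra! hne
    obtain ⟨hne₀, hne₁, hne₂⟩ := hne
    have hne₃ : m ≠ i + 2 := by rintro rfl; exact h₃ hm
    have hne₄ : m ≠ i + 3 := by rintro rfl; exact h₄ hm
    have hQ : ∀ c, G.Adj (Q m) (Q c) → m + 1 = c ∨ c + 1 = m := fun c h => (Q.map_adj_iff.1 h).2
    have hm₁ : ¬ G.Adj (Q m) (Q i) := fun h => (hQ _ h).elim
      (fun h => hne₀ (eq_sub_of_add_eq h)) (fun h => hne₂ h.symm)
    have hm₂ : ¬ G.Adj (Q m) (Q (i + 1)) := fun h => (hQ _ h).elim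
      (fun h => hne₁ (add_right_cancel h)) (fun h => hne₃ (by linear_combination -h))
    have hm₃ : ¬ G.Adj (Q m) (Q (i + 2)) := fun h => (hQ _ h).elim
      (fun h => hne₂ (by linear_combination h)) (fun h => hne₄ (by linear_combination -h))
    exact not_adj_of_bull_free hbull (Q.comp (cycleArc i (by omega))) (by simpa using h₁) h₂ h₃
      (by simpa using hm₁) hm₂ hm₃ hm
  · rintro (rfl | rfl | rfl) <;> assumption

theorem adj_add_two_of_adj_adj_add_one (hbull : ¬ bull ⊴ G) (hchair : ¬ chair ⊴ G) (hp : 6 < p)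
    (hu : u ∉ Set.range Q) (hA : u ∉ Aset G Q) {j : Fin p} (h₁ : G.Adj u (Q j))
    (h₂ : G.Adj u (Q (j + 1))) : G.Adj u (Q (j + 2)) := by
  by_contra h₃
  have h₀ := adj_sub_one_of_bull_free Q hbull (by omega) h₁ h₂ h₃
  exact hA (Set.mem_iUnion.2 ⟨j, mem_AsetI_of_adj Q hbull hchair hp hu h₀ h₁ h₂ h₃⟩)

theorem mem_Dset_of_adj_adj_add_one (hbull : ¬ bull ⊴ G) (hchair : ¬ chair ⊴ G) (hp : 6 < p)
    (hu : u ∉ Set.range Q) (hA : u ∉ Aset G Q) {j : Fin p} (h₀ : G.Adj u (Q j))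
    (h₁ : G.Adj u (Q (j + 1))) : u ∈ Dset G Q := by
  have hrun := add_nsmul_of_forall_add (P := fun k => G.Adj u (Q k) ∧ G.Adj u (Q (k + 1)))
    (c := 1) (fun k ⟨hk, hk₁⟩ => ⟨hk₁, by
      simpa [add_assoc, one_add_one_eq_two] using
        adj_add_two_of_adj_adj_add_one Q hbull hchair hp hu hA hk hk₁⟩) ⟨h₀, h₁⟩
  refine ⟨fun k h => hu ⟨k, h.symm⟩, fun m => ?_⟩
  simpa using (hrun (m - j).val).1

theorem exists_adj_adj_add_one_of_adj (hchair : ¬ chair ⊴ G) (hodd : Odd p) (hp : 4 < p)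
    (hu : u ∉ Set.range Q) {j : Fin p} (h : G.Adj u (Q j)) :
    ∃ k, G.Adj u (Q k) ∧ G.Adj u (Q (k + 1)) := by
  by_contra! hno
  have hstep : ∀ k, G.Adj u (Q k) → G.Adj u (Q (k + 2)) := fun k hk =>
    adj_add_two_of_chair_free Q hchair hp hu
      (fun h => hno _ h (by simpa using hk)) hk (hno k hk)
  have := add_nsmul_of_forall_add hstep h ((p + 1) / 2)
  rw [Fin.nsmul_two_eq_one_of_odd hodd] at this
  exact hno j h this

theorem mem_Aset_or_mem_Dset_of_adj (hbull : ¬ bull ⊴ G) (hchair : ¬ chair ⊴ G) (hodd : Odd p)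
    (hp : 6 < p) (hu : u ∉ Set.range Q) {j : Fin p} (h : G.Adj u (Q j)) :
    u ∈ Aset G Q ∨ u ∈ Dset G Q := by
  refine or_iff_not_imp_left.2 fun hA => ?_
  obtain ⟨k, hk, hk₁⟩ := exists_adj_adj_add_one_of_adj Q hchair hodd (by omega) hu h
  exact mem_Dset_of_adj_adj_add_one Q hbull hchair hp hu hA hk hk₁

theorem exists_adj_of_adj_mem_AsetI (hchair : ¬ chair ⊴ G) (hp : 4 < p) {i : Fin p} {w : V}
    (hw : w ∈ AsetI G Q i) (hu : u ∉ Set.range Q) (huw : G.Adj u w) : ∃ j, G.Adj u (Q j) := by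
  obtain ⟨-, hwN⟩ := hw
  obtain ⟨e₀, e₁, e₂, e₃⟩ := comp_cycleArc_sub_one_apply Q hp i
  have hP : ∀ k : Fin 4, k ≠ 3 → Q.comp (cycleArc (i - 1) hp) k ≠ Q (i + 2) :=
    fun k hk => e₃ ▸ (Q.comp (cycleArc (i - 1) hp)).injective.ne hk
  have hw₃ : ¬ G.Adj w (Q (i + 2)) := fun h => by
    rcases (hwN _).1 h with h | h | h
    · exact hP 0 (by decide) (by rw [e₀, h])
    · exact hP 1 (by decide) (by rw [e₁, h])
    · exact hP 2 (by decide) (by rw [e₂, h])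
  by_contra! h
  exact h _ (e₃ ▸ adj_three_of_adj_of_chair_free hchair _ (e₀ ▸ (hwN _).2 (.inl rfl))
    (e₂ ▸ (hwN _).2 (.inr (.inr rfl))) (e₃ ▸ hw₃) huw (e₀ ▸ fun h => hu ⟨_, h.symm⟩)
    (e₀ ▸ h _) (e₂ ▸ h _))

end Cycle

end SimpleGraph

theorem A_has_no_outside_neighbors {V : Type*} (G : SimpleGraph V)
    (hbull : ¬ Nonempty (bull ↪g G)) (hchair : ¬ Nonempty (chair ↪g G))
    (p : ℕ) [NeZero p] (hodd : Odd p) (hp : 7 ≤ p)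
    (v : Fin p → V) (hvinj : Function.Injective v)
    (hv : ∀ i j : Fin p, G.Adj (v i) (v j) ↔ (cycleG p).Adj i j) :
    ∀ w ∈ Aset G v, ∀ u : V,
      u ∉ Set.range v → u ∉ Aset G v → u ∉ Dset G v → ¬ G.Adj w u := by
  intro w hw u huQ huA huD hwu
  let Q : cycleG p ↪g G := ⟨⟨v, hvinj⟩, hv _ _⟩
  obtain ⟨i, hwi⟩ := Set.mem_iUnion.1 hw
  obtain ⟨j, hj⟩ := exists_adj_of_adj_mem_AsetI Q hchair (by omega) hwi huQ hwu.symm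
  exact (mem_Aset_or_mem_Dset_of_adj Q hbull hchair hodd hp huQ hj).elim huA huD
end

section
/- Let G be a (bull, chair)-free graph containing an induced odd cycle Q = v_1 v_2 … v_p v_1 of length p ≥ 7 (p odd). Let A be the set of vertices w ∉ Q whose neighborhood in Q is exactly {v_{i-1}, v_i, v_{i+1}} for some i (modulo p), and let D be the set of vertices w ∉ Q adjacent to every vertex of Q. If a vertex w ∈ D has a neighbor in a connected component C of the graph G − (Q ∪ A ∪ D), then w is adjacent to every vertex of C. -/
open SimpleGraph Finset

open Fin.CommRing

/-!
Let `x ∉ Q ∪ A ∪ D` and let `S` be the set of its neighbours on `Q`. Together with `x` and a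
few consecutive vertices of `Q`, each of the following configurations in `S` induces a bull or a
chair: a neighbour `v (a+1)` with `v a, v (a+2), v (a+3)` non-neighbours (chair), a run of exactly
two consecutive neighbours (bull), and two consecutive neighbours at an end of a run together with
a further neighbour far from them (bull). If `S` has no two consecutive elements it is therefore
closed under `i ↦ i + 2`, and on an odd cycle this produces two consecutive elements after all.
Otherwise the end of a run of `S` forces the run to have length exactly three and `S` to contain
nothing else, that is `x ∈ A`. So vertices outside `Q ∪ A ∪ D` have no neighbour on `Q`.

Now if `w ∈ D` is adjacent to `a` but not to `b`, where `ab` is an edge of `G − (Q ∪ A ∪ D)`,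
then `w` with two nonadjacent vertices of `Q` and the path `a b` induces a chair; hence the
neighbourhood of `w` is closed along the edges of `G − (Q ∪ A ∪ D)`.
-/

namespace Fin

variable {p : ℕ} [NeZero p]

theorem add_natCast_add_natCast (a : Fin p) (m n : ℕ) :
    a + (m : ℕ) + (n : ℕ) = a + ((m + n : ℕ) : Fin p) := by
  rw [add_assoc, Nat.cast_add]

theorem add_natCast_inj (a : Fin p) {s t : ℕ} (hs : s < p) (ht : t < p) :
    a + (s : Fin p) = a + (t : Fin p) ↔ s = t := by
  rw [add_right_inj, Fin.ext_iff, Fin.val_natCast, Fin.val_natCast,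
    Nat.mod_eq_of_lt hs, Nat.mod_eq_of_lt ht]

theorem natCast_add_self (k : ℕ) : ((k + p : ℕ) : Fin p) = k := by
  rw [Nat.cast_add, natCast_self, add_zero]

theorem exists_add_natCast_eq (a j : Fin p) : ∃ d < p, j = a + (d : ℕ) :=
  ⟨(j - a).val, (j - a).isLt, by rw [Fin.cast_val_eq_self]; ring⟩

end Fin

theorem cycleG_adj_add_natCast_iff {p : ℕ} [NeZero p] (hp : 2 ≤ p) (a : Fin p) {s t : ℕ}
    (hs : s < p) (ht : t < p) :
    (cycleG p).Adj (a + (s : ℕ)) (a + (t : ℕ)) ↔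
      s + 1 = t ∨ t + 1 = s ∨ s + 1 = t + p ∨ t + 1 = s + p := by
  have hsucc : ∀ {m n : ℕ}, m < p → n < p →
      (a + (m : ℕ) + 1 = a + (n : ℕ) ↔ m + 1 = n ∨ m + 1 = n + p) := by
    intro m n hm hn
    rw [← Nat.cast_one, Fin.add_natCast_add_natCast]
    rcases Nat.lt_or_ge (m + 1) p with h | h
    · rw [Fin.add_natCast_inj a h hn]; omega
    · rw [show m + 1 = 0 + p by omega, Fin.natCast_add_self, Fin.add_natCast_inj a (by omega) hn]
      omega
  simp only [cycleG, Ne, Fin.add_natCast_inj a hs ht, hsucc hs ht, hsucc ht hs]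
  omega

namespace SimpleGraph

variable {V : Type*} {G : SimpleGraph V}

theorem nonempty_bull_embedding_s14 {x₀ x₁ x₂ x₃ x₄ : V}
    (h01 : G.Adj x₀ x₁) (h12 : G.Adj x₁ x₂) (h23 : G.Adj x₂ x₃) (h34 : G.Adj x₃ x₄)
    (h13 : G.Adj x₁ x₃) (n02 : ¬G.Adj x₀ x₂) (n03 : ¬G.Adj x₀ x₃) (n04 : ¬G.Adj x₀ x₄)
    (n14 : ¬G.Adj x₁ x₄) (n24 : ¬G.Adj x₂ x₄) :
    Nonempty (bull ↪g G) := by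
  set f := ![x₀, x₁, x₂, x₃, x₄]
  have hf : ∀ i j, G.Adj (f i) (f j) ↔ bull.Adj i j := by
    intro i j
    fin_cases i <;> fin_cases j <;> simp [f, bull, G.adj_comm, *]
  refine ⟨⟨⟨f, fun i j hij => ?_⟩, hf _ _⟩⟩
  -- `f` is injective since no two vertices of the bull have the same neighbourhood
  have htwin : ∀ k, bull.Adj i k ↔ bull.Adj j k := fun k => by rw [← hf, ← hf, hij]
  fin_cases i <;> fin_cases j <;> first | rfl | (revert htwin; simp [bull]; decide)

theorem nonempty_chair_embedding_s14 {c l₁ l₂ m t : V}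
    (h1 : G.Adj c l₁) (h2 : G.Adj c l₂) (hm : G.Adj c m) (ht : G.Adj m t)
    (n12 : ¬G.Adj l₁ l₂) (n1m : ¬G.Adj l₁ m) (n1t : ¬G.Adj l₁ t) (n2m : ¬G.Adj l₂ m)
    (n2t : ¬G.Adj l₂ t) (nct : ¬G.Adj c t) (d12 : l₁ ≠ l₂) :
    Nonempty (chair ↪g G) := by
  set f := ![c, l₁, l₂, m, t]
  have hf : ∀ i j, G.Adj (f i) (f j) ↔ chair.Adj i j := by
    intro i j
    fin_cases i <;> fin_cases j <;> simp [f, chair, G.adj_comm, *]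
  refine ⟨⟨⟨f, fun i j hij => ?_⟩, hf _ _⟩⟩
  -- `f` is injective since only the leaves `l₁`, `l₂` of the chair share their neighbourhood
  have htwin : ∀ k, chair.Adj i k ↔ chair.Adj j k := fun k => by rw [← hf, ← hf, hij]
  fin_cases i <;> fin_cases j <;>
    first | rfl | (exact absurd hij d12) | (exact absurd hij.symm d12) |
      (revert htwin; simp [chair]; decide)

theorem Reachable.of_adj_closed {P : V → Prop}
    (hP : ∀ a b, G.Adj a b → P a → P b) {u v : V} (huv : G.Reachable u v) (hu : P u) : P v := by
  rw [reachable_iff_reflTransGen] at huv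
  induction huv with
  | refl => exact hu
  | tail _ hab ih => exact hP _ _ hab ih

end SimpleGraph

section CycleSubsets

variable {p : ℕ} [NeZero p] {S : Fin p → Prop}

theorem exists_consecutive_of_odd (hodd : Odd p)
    (hisol : ∀ a, ¬S a → S (a + (1 : ℕ)) → ¬S (a + (2 : ℕ)) → ¬S (a + (3 : ℕ)) → False)
    {j : Fin p} (hj : S j) : ∃ a, S a ∧ S (a + (1 : ℕ)) := by
  by_contra! hcons
  have hstep : ∀ a, S a → S (a + (2 : ℕ)) := by
    intro a ha
    by_contra h2
    obtain ⟨b, rfl⟩ : ∃ b, a = b + (1 : ℕ) := ⟨a - (1 : ℕ), by ring⟩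
    have h1 := hcons _ ha
    simp only [Fin.add_natCast_add_natCast, Nat.reduceAdd] at h1 h2
    exact hisol b (fun hb => hcons b hb ha) ha h1 h2
  have hiter : ∀ k : ℕ, S (j + ((2 * k : ℕ) : Fin p)) := by
    intro k
    induction k with
    | zero => simpa using hj
    | succ k ih => simpa only [Fin.add_natCast_add_natCast, mul_add_one] using hstep _ ih
  -- `2 (m + 1) = p + 1`: on an odd cycle, steps of `2` reach the next vertex
  obtain ⟨m, hm⟩ := hodd
  have hwrap : j + ((2 * (m + 1) : ℕ) : Fin p) = j + (1 : ℕ) := by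
    rw [show 2 * (m + 1) = 1 + p by omega, Fin.natCast_add_self]
  exact hcons j hj (hwrap ▸ hiter (m + 1))

theorem exists_run_end {a m : Fin p} (ha : S a) (ha₁ : S (a + (1 : ℕ))) (hm : ¬S m) :
    ∃ i, S i ∧ S (i + (1 : ℕ)) ∧ ¬S (i + (2 : ℕ)) := by
  by_contra! hrun
  have hall : ∀ k : ℕ, S (a + (k : ℕ)) ∧ S (a + ((k + 1 : ℕ) : Fin p)) := by
    intro k
    induction k with
    | zero => simpa using ⟨ha, ha₁⟩
    | succ k ih =>
      have := hrun _ ih.1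
      simp only [Fin.add_natCast_add_natCast] at this
      exact ⟨ih.2, this ih.2⟩
  obtain ⟨d, -, rfl⟩ := Fin.exists_add_natCast_eq a m
  exact hm (hall d).1

theorem eq_triple_of_run_end (hp : 7 ≤ p)
    (hpair : ∀ a, ¬S a → S (a + (1 : ℕ)) → S (a + (2 : ℕ)) → ¬S (a + (3 : ℕ)) → False)
    (hfarL : ∀ a (d : ℕ), 4 ≤ d → d + 2 ≤ p →
      ¬S a → S (a + (1 : ℕ)) → S (a + (2 : ℕ)) → S (a + d) → False)
    (hfarR : ∀ a (d : ℕ), 5 ≤ d → d < p →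
      S (a + (1 : ℕ)) → S (a + (2 : ℕ)) → ¬S (a + (3 : ℕ)) → S (a + d) → False)
    {i : Fin p} (hi : S i) (hi₁ : S (i + (1 : ℕ))) (hi₂ : ¬S (i + (2 : ℕ))) (j : Fin p) :
    S j ↔ j = i - 1 ∨ j = i ∨ j = i + 1 := by
  obtain ⟨e, rfl⟩ : ∃ e, i = e + (2 : ℕ) := ⟨i - (2 : ℕ), by ring⟩
  have hpair' := hpair (e + (1 : ℕ))
  have hfarR' := hfarR (e + (1 : ℕ))
  simp only [Fin.add_natCast_add_natCast, Nat.reduceAdd] at hi₁ hi₂ hpair' hfarR'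
  have he₁ : S (e + (1 : ℕ)) := by_contra fun h => hpair' h hi hi₁ hi₂
  have he₀ : ¬S e := fun h => hfarR' (p - 1) (by omega) (by omega) hi hi₁ hi₂
    (by rwa [show 1 + (p - 1) = 0 + p by omega, Fin.natCast_add_self, Nat.cast_zero, add_zero])
  have hS : ∀ d < p, S (e + (d : ℕ)) ↔ d = 1 ∨ d = 2 ∨ d = 3 := by
    intro d hd
    refine ⟨fun h => ?_, by rintro (rfl | rfl | rfl) <;> assumption⟩
    by_contra hne
    rcases (by omega : d = 0 ∨ d = 4 ∨ (5 ≤ d ∧ d + 2 ≤ p) ∨ d + 1 = p) with rfl | rfl | hd' | hd'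
    · exact he₀ (by simpa using h)
    · exact hi₂ h
    · exact hfarL e d (by omega) hd'.2 he₀ he₁ hi h
    · exact hfarR' (p - 2) (by omega) (by omega) hi hi₁ hi₂ (by rwa [show 1 + (p - 2) = d by omega])
  obtain ⟨d, hd, rfl⟩ := Fin.exists_add_natCast_eq e j
  have hprev : e + ((2 : ℕ) : Fin p) - 1 = e + (1 : ℕ) := by push_cast; ring
  have hnext : e + ((2 : ℕ) : Fin p) + 1 = e + (3 : ℕ) := by push_cast; ring
  rw [hS d hd, hprev, hnext, Fin.add_natCast_inj e hd (by omega),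
    Fin.add_natCast_inj e hd (by omega), Fin.add_natCast_inj e hd (by omega)]

theorem forall_not_or_forall_or_eq_triple (hp : 7 ≤ p) (hodd : Odd p)
    (hisol : ∀ a, ¬S a → S (a + (1 : ℕ)) → ¬S (a + (2 : ℕ)) → ¬S (a + (3 : ℕ)) → False)
    (hpair : ∀ a, ¬S a → S (a + (1 : ℕ)) → S (a + (2 : ℕ)) → ¬S (a + (3 : ℕ)) → False)
    (hfarL : ∀ a (d : ℕ), 4 ≤ d → d + 2 ≤ p →
      ¬S a → S (a + (1 : ℕ)) → S (a + (2 : ℕ)) → S (a + d) → False)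
    (hfarR : ∀ a (d : ℕ), 5 ≤ d → d < p →
      S (a + (1 : ℕ)) → S (a + (2 : ℕ)) → ¬S (a + (3 : ℕ)) → S (a + d) → False) :
    (∀ j, ¬S j) ∨ (∀ j, S j) ∨ ∃ i, ∀ j, S j ↔ j = i - 1 ∨ j = i ∨ j = i + 1 := by
  by_cases hnone : ∀ j, ¬S j
  · exact Or.inl hnone
  by_cases hall : ∀ j, S j
  · exact Or.inr (Or.inl hall)
  push Not at hnone hall
  obtain ⟨j, hj⟩ := hnone
  obtain ⟨m, hm⟩ := hall
  obtain ⟨a, ha, ha₁⟩ := exists_consecutive_of_odd hodd hisol hj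
  obtain ⟨i, hi, hi₁, hi₂⟩ := exists_run_end ha ha₁ hm
  exact Or.inr (Or.inr ⟨i, eq_triple_of_run_end hp hpair hfarL hfarR hi hi₁ hi₂⟩)

end CycleSubsets

section Patterns

variable {V : Type*} {G : SimpleGraph V} {p : ℕ} [NeZero p] {v : Fin p → V} {x : V}
  (hv : ∀ i j : Fin p, G.Adj (v i) (v j) ↔ (cycleG p).Adj i j) (hp : 7 ≤ p) (a : Fin p)
include hv hp

theorem nonempty_chair_embedding_of_isolated_nbr (hx : x ≠ v a)
    (h0 : ¬G.Adj x (v a)) (h1 : G.Adj x (v (a + (1 : ℕ))))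
    (h2 : ¬G.Adj x (v (a + (2 : ℕ)))) (h3 : ¬G.Adj x (v (a + (3 : ℕ)))) :
    Nonempty (chair ↪g G) := by
  rw [← add_zero a, ← Nat.cast_zero] at h0 hx
  refine nonempty_chair_embedding_s14 (c := v (a + (1 : ℕ))) (l₂ := v (a + (0 : ℕ)))
    (m := v (a + (2 : ℕ))) (t := v (a + (3 : ℕ))) h1.symm ?_ ?_ ?_ h0 h2 h3 ?_ ?_ ?_ hx
  all_goals simp (disch := omega) only [hv, cycleG_adj_add_natCast_iff, true_or, or_true] <;> omega

theorem nonempty_bull_embedding_of_nbr_pair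
    (h0 : ¬G.Adj x (v a)) (h1 : G.Adj x (v (a + (1 : ℕ))))
    (h2 : G.Adj x (v (a + (2 : ℕ)))) (h3 : ¬G.Adj x (v (a + (3 : ℕ)))) :
    Nonempty (bull ↪g G) := by
  rw [← add_zero a, ← Nat.cast_zero] at h0
  refine nonempty_bull_embedding_s14 (x₀ := v (a + (0 : ℕ))) (x₁ := v (a + (1 : ℕ))) (x₂ := x)
    (x₃ := v (a + (2 : ℕ))) (x₄ := v (a + (3 : ℕ))) ?_ h1.symm h2 ?_ ?_ (fun h => h0 h.symm)
    ?_ ?_ ?_ h3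
  all_goals simp (disch := omega) only [hv, cycleG_adj_add_natCast_iff, true_or] <;> omega

theorem nonempty_bull_embedding_of_far_nbr_left {d : ℕ} (hd : 4 ≤ d) (hdp : d + 2 ≤ p)
    (h0 : ¬G.Adj x (v a)) (h1 : G.Adj x (v (a + (1 : ℕ))))
    (h2 : G.Adj x (v (a + (2 : ℕ)))) (hd' : G.Adj x (v (a + d))) :
    Nonempty (bull ↪g G) := by
  rw [← add_zero a, ← Nat.cast_zero] at h0
  refine nonempty_bull_embedding_s14 (x₀ := v (a + (0 : ℕ))) (x₁ := v (a + (1 : ℕ)))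
    (x₂ := v (a + (2 : ℕ))) (x₃ := x) (x₄ := v (a + d)) ?_ ?_ h2.symm hd' h1.symm ?_
    (fun h => h0 h.symm) ?_ ?_ ?_
  all_goals simp (disch := omega) only [hv, cycleG_adj_add_natCast_iff, true_or] <;> omega

theorem nonempty_bull_embedding_of_far_nbr_right {d : ℕ} (hd : 5 ≤ d) (hdp : d < p)
    (h1 : G.Adj x (v (a + (1 : ℕ)))) (h2 : G.Adj x (v (a + (2 : ℕ))))
    (h3 : ¬G.Adj x (v (a + (3 : ℕ)))) (hd' : G.Adj x (v (a + d))) :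
    Nonempty (bull ↪g G) := by
  refine nonempty_bull_embedding_s14 (x₀ := v (a + (3 : ℕ))) (x₁ := v (a + (2 : ℕ)))
    (x₂ := v (a + (1 : ℕ))) (x₃ := x) (x₄ := v (a + d)) ?_ ?_ h1.symm hd' h2.symm ?_
    (fun h => h3 h.symm) ?_ ?_ ?_
  all_goals simp (disch := omega) only [hv, cycleG_adj_add_natCast_iff, true_or, or_true] <;> omega

end Patterns

section Main

variable {V : Type*} {G : SimpleGraph V} {p : ℕ} [NeZero p] {v : Fin p → V}

theorem not_adj_of_mem_compl (hbull : ¬Nonempty (bull ↪g G)) (hchair : ¬Nonempty (chair ↪g G))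
    (hp : 7 ≤ p) (hodd : Odd p) (hv : ∀ i j : Fin p, G.Adj (v i) (v j) ↔ (cycleG p).Adj i j)
    {x : V} (hx : x ∈ (Set.range v ∪ Aset G v ∪ Dset G v)ᶜ) (j : Fin p) :
    ¬G.Adj x (v j) := by
  simp only [Set.mem_compl_iff, Set.mem_union, Set.mem_range, not_or, not_exists] at hx
  obtain ⟨⟨hxv, hxA⟩, hxD⟩ := hx
  have hxv' : ∀ j, x ≠ v j := fun j h => hxv j h.symm
  rcases forall_not_or_forall_or_eq_triple (S := fun j => G.Adj x (v j)) hp hodd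
      (fun a h0 h1 h2 h3 =>
        hchair (nonempty_chair_embedding_of_isolated_nbr hv hp a (hxv' a) h0 h1 h2 h3))
      (fun a h0 h1 h2 h3 => hbull (nonempty_bull_embedding_of_nbr_pair hv hp a h0 h1 h2 h3))
      (fun a _ hd hdp h0 h1 h2 hd' =>
        hbull (nonempty_bull_embedding_of_far_nbr_left hv hp a hd hdp h0 h1 h2 hd'))
      (fun a _ hd hdp h1 h2 h3 hd' =>
        hbull (nonempty_bull_embedding_of_far_nbr_right hv hp a hd hdp h1 h2 h3 hd'))
    with hnone | hall | ⟨i, hi⟩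
  · exact hnone j
  · exact (hxD ⟨hxv', hall⟩).elim
  · exact (hxA (Set.mem_iUnion.mpr ⟨i, hxv', hi⟩)).elim

theorem adj_of_mem_Dset_of_adj (hbull : ¬Nonempty (bull ↪g G)) (hchair : ¬Nonempty (chair ↪g G))
    (hp : 7 ≤ p) (hodd : Odd p) (hvinj : Function.Injective v)
    (hv : ∀ i j : Fin p, G.Adj (v i) (v j) ↔ (cycleG p).Adj i j)
    {w : V} (hw : w ∈ Dset G v) {a b : V} (ha : a ∈ (Set.range v ∪ Aset G v ∪ Dset G v)ᶜ)
    (hb : b ∈ (Set.range v ∪ Aset G v ∪ Dset G v)ᶜ) (hwa : G.Adj w a) (hab : G.Adj a b) :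
    G.Adj w b := by
  by_contra hwb
  have hna := not_adj_of_mem_compl hbull hchair hp hodd hv ha
  have hnb := not_adj_of_mem_compl hbull hchair hp hodd hv hb
  have hsep : ¬G.Adj (v (0 + (0 : ℕ))) (v (0 + (2 : ℕ))) := by
    simp (disch := omega) only [hv, cycleG_adj_add_natCast_iff]; omega
  have hne : v (0 + (0 : ℕ)) ≠ v (0 + (2 : ℕ)) :=
    hvinj.ne (by rw [Ne, Fin.add_natCast_inj 0 (by omega) (by omega)]; omega)
  exact hchair (nonempty_chair_embedding_s14 (hw.2 _) (hw.2 _) hwa hab hsep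
    (fun h => hna _ h.symm) (fun h => hnb _ h.symm) (fun h => hna _ h.symm)
    (fun h => hnb _ h.symm) hwb hne)

end Main

theorem D_dominates_components {V : Type*} (G : SimpleGraph V)
    (hbull : ¬ Nonempty (bull ↪g G)) (hchair : ¬ Nonempty (chair ↪g G))
    (p : ℕ) [NeZero p] (hodd : Odd p) (hp : 7 ≤ p)
    (v : Fin p → V) (hvinj : Function.Injective v)
    (hv : ∀ i j : Fin p, G.Adj (v i) (v j) ↔ (cycleG p).Adj i j)
    (w : V) (hwD : w ∈ Dset G v)
    (C : (G.induce ((Set.range v ∪ Aset G v ∪ Dset G v)ᶜ)).ConnectedComponent)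
    (hadj : ∃ u : ((Set.range v ∪ Aset G v ∪ Dset G v)ᶜ : Set V),
      (G.induce ((Set.range v ∪ Aset G v ∪ Dset G v)ᶜ)).connectedComponentMk u = C ∧
        G.Adj w u) :
    ∀ u : ((Set.range v ∪ Aset G v ∪ Dset G v)ᶜ : Set V),
      (G.induce ((Set.range v ∪ Aset G v ∪ Dset G v)ᶜ)).connectedComponentMk u = C →
        G.Adj w u := by
  intro u hu
  obtain ⟨u₀, hu₀, hwu₀⟩ := hadj
  have hreach := ConnectedComponent.exact (hu₀.trans hu.symm)
  refine hreach.of_adj_closed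
    (P := fun y : ((Set.range v ∪ Aset G v ∪ Dset G v)ᶜ : Set V) => G.Adj w y)
    (fun a b hab hwa => ?_) hwu₀
  exact adj_of_mem_Dset_of_adj hbull hchair hp hodd hvinj hv hwD a.2 b.2 hwa hab
end
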